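/- arXiv:2308.00390 — 8 statements merged into one kernel-verified Lean document; each statement's English description precedes it below -/
import Mathlib

section
/- Let G be a (Δ+7)-critical finite simple graph with maximum degree Δ satisfying 7 ≤ Δ ≤ 8 and girth at least 5. Then G has no two adjacent vertices of degree 2. -/
open Finset

variable {V : Type*}

/-- `G` admits a 2-distance coloring with `m` colors: any two distinct vertices that are
adjacent or share a common neighbour receive different colors. -/
def Colorable2 {W : Type*} (G : SimpleGraph W) (m : ℕ) : Prop :=
  ∃ c : W → Fin m, ∀ u v : W, u ≠ v →
    (G.Adj u v ∨ ∃ x, G.Adj u x ∧ G.Adj x v) → c u ≠ c v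

/-- `G` is `m`-critical: `G` admits no 2-distance coloring with `m` colors, but
the graph obtained by deleting any single vertex or any single edge does. -/
def Critical2 (G : SimpleGraph V) (m : ℕ) : Prop :=
  ¬ Colorable2 G m ∧
  (∀ v : V, Colorable2 (G.induce {u | u ≠ v}) m) ∧
  (∀ u v : V, G.Adj u v → Colorable2 (G.deleteEdges {s(u, v)}) m)

/-- a partial 2-distance coloring of `G` with colored vertex set `T`:
any two distinct vertices of `T` that are adjacent or share a common
neighbour receive different colors. -/
def IsPartial2Coloring (G : SimpleGraph V) {m : ℕ} (T : Set V) (c : V → Fin m) : Prop :=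
  ∀ u ∈ T, ∀ v ∈ T, u ≠ v → (G.Adj u v ∨ ∃ x, G.Adj u x ∧ G.Adj x v) → c u ≠ c v

variable [Fintype V] [DecidableEq V]

/-- `D(v)`: the sum of the degrees of the neighbours of `v`. -/
def bigD (G : SimpleGraph V) [DecidableRel G.Adj] (v : V) : ℕ :=
  ∑ u ∈ G.neighborFinset v, G.degree u

/-- `n₂^i(v)`: the number of degree-2 neighbours of `v` having a neighbour of degree `i`. -/
def n2 (G : SimpleGraph V) [DecidableRel G.Adj] (i : ℕ) (v : V) : ℕ :=
  ((G.neighborFinset v).filter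
    (fun u => G.degree u = 2 ∧ ∃ w ∈ G.neighborFinset u, G.degree w = i)).card

/-- `v` is `k`-expendable if `D(v) < Δ + k + ∑_{i=3}^{k-1} n₂^i(v)`. -/
def Expendable (G : SimpleGraph V) [DecidableRel G.Adj] (k : ℕ) (v : V) : Prop :=
  bigD G v < G.maxDegree + k + ∑ i ∈ Finset.Icc 3 (k - 1), n2 G i v

instance (G : SimpleGraph V) [DecidableRel G.Adj] (k : ℕ) (v : V) :
    Decidable (Expendable G k v) := Nat.decLt _ _

/-- `e_k(v)`: the number of `k`-expendable vertices `u ≠ v` that are adjacent to `v` or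
share a common neighbour with `v`. -/
def ek (G : SimpleGraph V) [DecidableRel G.Adj] (k : ℕ) (v : V) : ℕ :=
  (Finset.univ.filter (fun u => u ≠ v ∧
    (G.Adj u v ∨ ∃ w, G.Adj u w ∧ G.Adj w v) ∧ Expendable G k u)).card

/-- `v` is `k`-light if `D(v) < Δ + k + e_k(v)`. -/
def Light (G : SimpleGraph V) [DecidableRel G.Adj] (k : ℕ) (v : V) : Prop :=
  bigD G v < G.maxDegree + k + ek G k v

instance (G : SimpleGraph V) [DecidableRel G.Adj] (k : ℕ) (v : V) :
    Decidable (Light G k v) := Nat.decLt _ _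

/-- `v` is `k`-heavy if it is not `k`-light. -/
def Heavy (G : SimpleGraph V) [DecidableRel G.Adj] (k : ℕ) (v : V) : Prop :=
  ¬ Light G k v

/-- `v` is an `a(d)`-vertex: a vertex of degree `a` with exactly `d` neighbours of degree 2. -/
def IsKD (G : SimpleGraph V) [DecidableRel G.Adj] (a d : ℕ) (v : V) : Prop :=
  G.degree v = a ∧ ((G.neighborFinset v).filter (fun u => G.degree u = 2)).card = d

lemma exists_fresh {m : ℕ} (S : Finset (Fin m)) (hS : S.card < m) : ∃ a, a ∉ S := by
  by_contra h
  push_neg at h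
  have hsub : (univ : Finset (Fin m)) ⊆ S := fun a _ => h a
  have := Finset.card_le_card hsub
  simp [Finset.card_univ] at this
  omega

lemma dist2_card_bound (G : SimpleGraph V) [DecidableRel G.Adj] {x y : V}
    (hxy : G.Adj x y) (hdx : G.degree x = 2) (hdy : G.degree y = 2) :
    ∀ (T : Finset V), (∀ w ∈ T, G.Adj w x ∨ ∃ z, G.Adj w z ∧ G.Adj z x) →
      T.card ≤ G.maxDegree + 4 := by
  classical
  intro T hT
  have hsub : T ⊆ G.neighborFinset x ∪
      (G.neighborFinset x).biUnion (fun z => G.neighborFinset z) := by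
    intro w hw
    rcases hT w hw with h | ⟨z, h1, h2⟩
    · exact mem_union_left _ (by simpa [SimpleGraph.mem_neighborFinset] using h.symm)
    · refine mem_union_right _ (mem_biUnion.2 ⟨z, ?_, ?_⟩)
      · simpa [SimpleGraph.mem_neighborFinset] using h2.symm
      · simpa [SimpleGraph.mem_neighborFinset] using h1.symm
  have hcardN : (G.neighborFinset x).card = 2 := by
    rw [G.card_neighborFinset_eq_degree]; exact hdx
  have hymem : y ∈ G.neighborFinset x := by simpa [SimpleGraph.mem_neighborFinset] using hxy
  have h3 : ((G.neighborFinset x).erase y).card = 1 := by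
    rw [Finset.card_erase_of_mem hymem, hcardN]
  have hsum : ∑ z ∈ G.neighborFinset x, (G.neighborFinset z).card ≤ 2 + G.maxDegree := by
    rw [← Finset.add_sum_erase _ _ hymem]
    have h1 : (G.neighborFinset y).card = 2 := by
      rw [G.card_neighborFinset_eq_degree]; exact hdy
    have h2 : ∑ z ∈ (G.neighborFinset x).erase y, (G.neighborFinset z).card ≤
        ((G.neighborFinset x).erase y).card • G.maxDegree := by
      apply Finset.sum_le_card_nsmul
      intro z _
      rw [G.card_neighborFinset_eq_degree]
      exact G.degree_le_maxDegree z
    rw [h3, one_smul] at h2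
    omega
  calc T.card ≤ _ := Finset.card_le_card hsub
    _ ≤ (G.neighborFinset x).card +
        ((G.neighborFinset x).biUnion (fun z => G.neighborFinset z)).card :=
        Finset.card_union_le _ _
    _ ≤ (G.neighborFinset x).card + ∑ z ∈ G.neighborFinset x, (G.neighborFinset z).card := by
        gcongr; exact Finset.card_biUnion_le
    _ ≤ 2 + (2 + G.maxDegree) := by omega
    _ = G.maxDegree + 4 := by omega

theorem stmt6 (G : SimpleGraph V) [DecidableRel G.Adj]
    (hG : Critical2 G (G.maxDegree + 7))
    (hΔ1 : 7 ≤ G.maxDegree) (hΔ2 : G.maxDegree ≤ 8) (hg : 5 ≤ G.girth) :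
    ¬ ∃ u v : V, G.Adj u v ∧ G.degree u = 2 ∧ G.degree v = 2 := by
  classical
  rintro ⟨u, v, huv, hdu, hdv⟩
  obtain ⟨hnc, -, hdel⟩ := hG
  obtain ⟨c, hc⟩ := hdel u v huv
  apply hnc
  have hne : u ≠ v := G.ne_of_adj huv
  -- the forbidden sets
  let Tu : Finset V := univ.filter (fun w => w ≠ u ∧ w ≠ v ∧
    (G.Adj w u ∨ ∃ z, G.Adj w z ∧ G.Adj z u))
  let Tv : Finset V := univ.filter (fun w => w ≠ u ∧ w ≠ v ∧
    (G.Adj w v ∨ ∃ z, G.Adj w z ∧ G.Adj z v))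
  have hTuc : Tu.card ≤ G.maxDegree + 4 :=
    dist2_card_bound G huv hdu hdv Tu (fun w hw => by
      simp only [Tu, mem_filter] at hw; exact hw.2.2.2)
  have hTvc : Tv.card ≤ G.maxDegree + 4 :=
    dist2_card_bound G huv.symm hdv hdu Tv (fun w hw => by
      simp only [Tv, mem_filter] at hw; exact hw.2.2.2)
  obtain ⟨b, hb⟩ := exists_fresh (Tv.image c) (by
    have := Finset.card_image_le (s := Tv) (f := c); omega)
  obtain ⟨a, ha⟩ := exists_fresh (insert b (Tu.image c)) (by
    have h1 := Finset.card_image_le (s := Tu) (f := c)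
    have h2 := Finset.card_insert_le b (Tu.image c)
    omega)
  have hab : a ≠ b := by
    intro h; exact ha (by rw [h]; exact Finset.mem_insert_self _ _)
  refine ⟨fun w => if w = u then a else if w = v then b else c w, ?_⟩
  have hau : ∀ y, y ≠ u → y ≠ v → (G.Adj y u ∨ ∃ z, G.Adj y z ∧ G.Adj z u) → c y ≠ a := by
    intro y h1 h2 h3 heq
    apply ha
    apply Finset.mem_insert_of_mem
    exact Finset.mem_image.2 ⟨y, by simp [Tu, h1, h2, h3], heq⟩
  have hbv : ∀ y, y ≠ u → y ≠ v → (G.Adj y v ∨ ∃ z, G.Adj y z ∧ G.Adj z v) → c y ≠ b := by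
    intro y h1 h2 h3 heq
    exact hb (Finset.mem_image.2 ⟨y, by simp [Tv, h1, h2, h3], heq⟩)
  intro x y hxy hcon
  have hconsymm : (G.Adj y x ∨ ∃ z, G.Adj y z ∧ G.Adj z x) := by
    rcases hcon with h | ⟨z, h1, h2⟩
    · exact Or.inl h.symm
    · exact Or.inr ⟨z, h2.symm, h1.symm⟩
  by_cases hx1 : x = u
  · by_cases hy1 : y = v
    · simp only [if_pos hx1, if_neg (hy1 ▸ Ne.symm hne : y ≠ u), if_pos hy1]
      exact hab
    · have hy2 : y ≠ u := fun h => hxy (hx1.trans h.symm)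
      simp only [if_pos hx1, if_neg hy2, if_neg hy1]
      have := hau y hy2 hy1 (hx1 ▸ hconsymm)
      exact fun h => this h.symm
  · by_cases hx2 : x = v
    · by_cases hy1 : y = u
      · simp only [if_neg hx1, if_pos hx2, if_pos hy1]
        exact hab.symm
      · have hy2 : y ≠ v := fun h => hxy (hx2.trans h.symm)
        simp only [if_neg hx1, if_pos hx2, if_neg hy1, if_neg hy2]
        have := hbv y hy1 hy2 (hx2 ▸ hconsymm)
        exact fun h => this h.symm
    · by_cases hy1 : y = u
      · simp only [if_neg hx1, if_neg hx2, if_pos hy1]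
        exact hau x hx1 hx2 (hy1 ▸ hcon)
      · by_cases hy2 : y = v
        · simp only [if_neg hx1, if_neg hx2, if_neg hy1, if_pos hy2]
          exact hbv x hx1 hx2 (hy2 ▸ hcon)
        · simp only [if_neg hx1, if_neg hx2, if_neg hy1, if_neg hy2]
          apply hc x y hxy
          have hedge : ∀ p q : V, p ≠ u → p ≠ v → G.Adj p q →
              (G.deleteEdges {s(u,v)}).Adj p q := by
            intro p q hp1 hp2 hpq
            rw [SimpleGraph.deleteEdges_adj]
            refine ⟨hpq, ?_⟩
            simp only [Set.mem_singleton_iff, Sym2.eq, Sym2.rel_iff', Prod.mk.injEq,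
              Prod.swap_prod_mk]
            push_neg
            constructor
            · intro h; exact absurd h hp1
            · intro h; exact absurd h hp2
          rcases hcon with h | ⟨z, h1, h2⟩
          · exact Or.inl (hedge x y hx1 hx2 h)
          · exact Or.inr ⟨z, hedge x z hx1 hx2 h1, (hedge y z hy1 hy2 h2.symm).symm⟩
end

section
/- Let G be a (Δ+7)-critical finite simple graph with maximum degree Δ satisfying 7 ≤ Δ ≤ 8 and girth at least 5. If a vertex of degree 3 has a neighbour of degree 2, then its other two neighbours both have degree at least 6. -/
open Finset

variable {V : Type*}

variable [Fintype V] [DecidableEq V]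

theorem stmt8 (G : SimpleGraph V) [DecidableRel G.Adj]
    (hG : Critical2 G (G.maxDegree + 7))
    (hΔ1 : 7 ≤ G.maxDegree) (hΔ2 : G.maxDegree ≤ 8) (hg : 5 ≤ G.girth) :
    ∀ v u : V, G.degree v = 3 → G.Adj v u → G.degree u = 2 →
      ∀ w : V, G.Adj v w → w ≠ u → 6 ≤ G.degree w := by
  intro v u hdv hvu hdu w hvw hwu
  by_contra hw6
  have hdw : G.degree w ≤ 5 := by omega
  set Δ := G.maxDegree with hΔ
  set m := Δ + 7 with hm
  -- the symmetric 2-distance relation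
  have Rsymm : ∀ x y : V, (G.Adj x y ∨ ∃ t, G.Adj x t ∧ G.Adj t y) →
      (G.Adj y x ∨ ∃ t, G.Adj y t ∧ G.Adj t x) := by
    rintro x y (h | ⟨t, h1, h2⟩)
    · exact Or.inl h.symm
    · exact Or.inr ⟨t, h2.symm, h1.symm⟩
  have hvu' : v ≠ u := hvu.ne
  have hvw' : v ≠ w := hvw.ne
  obtain ⟨c, hc⟩ := hG.2.2 v u hvu
  -- the 2-ball of v excluding u and v
  set Bv : Finset V := Finset.univ.filter (fun z => z ≠ v ∧ z ≠ u ∧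
    (G.Adj v z ∨ ∃ x, G.Adj v x ∧ G.Adj x z)) with hBv
  have hBv_sub : Bv ⊆ ((G.neighborFinset v).erase u) ∪ (((G.neighborFinset u).erase v) ∪
      (((G.neighborFinset w).erase v) ∪
      ((((G.neighborFinset v).erase u).erase w).biUnion
        (fun x => (G.neighborFinset x).erase v)))) := by
    intro z hz
    simp only [hBv, Finset.mem_filter, Finset.mem_univ, true_and] at hz
    obtain ⟨hzv, hzu, h | ⟨x, hx1, hx2⟩⟩ := hz
    · exact Finset.mem_union_left _ (by simp [hzu, h])
    · by_cases hxu : x = u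
      · subst hxu
        exact Finset.mem_union_right _ (Finset.mem_union_left _ (by simp [hzv, hx2]))
      · by_cases hxw : x = w
        · subst hxw
          exact Finset.mem_union_right _ (Finset.mem_union_right _
            (Finset.mem_union_left _ (by simp [hzv, hx2])))
        · refine Finset.mem_union_right _ (Finset.mem_union_right _
            (Finset.mem_union_right _ (Finset.mem_biUnion.mpr ⟨x, by simp [hxu, hxw, hx1],
              by simp [hzv, hx2]⟩)))
  have cardNv : (G.neighborFinset v).card = 3 := by
    rw [G.card_neighborFinset_eq_degree]; exact hdv
  have hu_mem : u ∈ G.neighborFinset v := by simpa using hvu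
  have hw_mem : w ∈ G.neighborFinset v := by simpa using hvw
  have hBv_card : Bv.card ≤ Δ + 6 := by
    have h1 : ((G.neighborFinset v).erase u).card = 2 := by
      rw [Finset.card_erase_of_mem hu_mem, cardNv]
    have h2 : ((G.neighborFinset u).erase v).card = 1 := by
      rw [Finset.card_erase_of_mem (by simpa using hvu.symm),
        G.card_neighborFinset_eq_degree, hdu]
    have h3 : ((G.neighborFinset w).erase v).card ≤ 4 := by
      rw [Finset.card_erase_of_mem (by simpa using hvw.symm),
        G.card_neighborFinset_eq_degree]
      omega
    have hb1 : (((G.neighborFinset v).erase u).erase w).card = 1 := by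
      rw [Finset.card_erase_of_mem (by simp [hwu, hw_mem]), h1]
    have h4 : ((((G.neighborFinset v).erase u).erase w).biUnion
        (fun x => (G.neighborFinset x).erase v)).card ≤ Δ - 1 := by
      have := Finset.card_biUnion_le_card_mul
        (((G.neighborFinset v).erase u).erase w)
        (fun x => (G.neighborFinset x).erase v) (Δ - 1) ?_
      · rw [hb1, one_mul] at this; exact this
      · intro x hx
        show ((G.neighborFinset x).erase v).card ≤ Δ - 1
        have hxv : G.Adj v x := by
          simp only [Finset.mem_erase, SimpleGraph.mem_neighborFinset] at hx
          exact hx.2.2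
        have hd : ((G.neighborFinset x).erase v).card = G.degree x - 1 := by
          rw [Finset.card_erase_of_mem (by simpa using hxv.symm),
            G.card_neighborFinset_eq_degree]
        have := G.degree_le_maxDegree x
        omega
    have hle := Finset.card_le_card hBv_sub
    have u1 := Finset.card_union_le ((G.neighborFinset v).erase u)
      (((G.neighborFinset u).erase v) ∪ (((G.neighborFinset w).erase v) ∪
      ((((G.neighborFinset v).erase u).erase w).biUnion
        (fun x => (G.neighborFinset x).erase v))))
    have u2 := Finset.card_union_le ((G.neighborFinset u).erase v)
      (((G.neighborFinset w).erase v) ∪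
      ((((G.neighborFinset v).erase u).erase w).biUnion
        (fun x => (G.neighborFinset x).erase v)))
    have u3 := Finset.card_union_le ((G.neighborFinset w).erase v)
      ((((G.neighborFinset v).erase u).erase w).biUnion
        (fun x => (G.neighborFinset x).erase v))
    omega
  -- pick a fresh color for v
  have hexa : ∃ a : Fin m, a ∉ Bv.image c := by
    by_contra h
    push_neg at h
    have hsub : (Finset.univ : Finset (Fin m)) ⊆ Bv.image c := fun a _ => h a
    have := (Finset.card_le_card hsub).trans (Finset.card_image_le)
    simp only [Finset.card_univ, Fintype.card_fin] at this
    omega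
  obtain ⟨a, ha⟩ := hexa
  set c1 : V → Fin m := Function.update c v a with hc1
  -- the 2-ball of u excluding u
  set Bu : Finset V := Finset.univ.filter (fun z => z ≠ u ∧
    (G.Adj u z ∨ ∃ x, G.Adj u x ∧ G.Adj x z)) with hBu
  have hBu_sub : Bu ⊆ (G.neighborFinset u) ∪ (((G.neighborFinset v).erase u) ∪
      (((G.neighborFinset u).erase v).biUnion (fun x => (G.neighborFinset x).erase u))) := by
    intro z hz
    simp only [hBu, Finset.mem_filter, Finset.mem_univ, true_and] at hz
    obtain ⟨hzu, h | ⟨x, hx1, hx2⟩⟩ := hz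
    · exact Finset.mem_union_left _ (by simpa using h)
    · by_cases hxv : x = v
      · subst hxv
        exact Finset.mem_union_right _ (Finset.mem_union_left _ (by simp [hzu, hx2]))
      · exact Finset.mem_union_right _ (Finset.mem_union_right _
          (Finset.mem_biUnion.mpr ⟨x, by simp [hxv, hx1], by simp [hzu, hx2]⟩))
  have hBu_card : Bu.card ≤ Δ + 3 := by
    have h1 : (G.neighborFinset u).card = 2 := by
      rw [G.card_neighborFinset_eq_degree]; exact hdu
    have h2 : ((G.neighborFinset v).erase u).card = 2 := by
      rw [Finset.card_erase_of_mem hu_mem, cardNv]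
    have hb1 : ((G.neighborFinset u).erase v).card = 1 := by
      rw [Finset.card_erase_of_mem (by simpa using hvu.symm), h1]
    have h4 : (((G.neighborFinset u).erase v).biUnion
        (fun x => (G.neighborFinset x).erase u)).card ≤ Δ - 1 := by
      have := Finset.card_biUnion_le_card_mul ((G.neighborFinset u).erase v)
        (fun x => (G.neighborFinset x).erase u) (Δ - 1) ?_
      · rw [hb1, one_mul] at this; exact this
      · intro x hx
        show ((G.neighborFinset x).erase u).card ≤ Δ - 1
        have hxadj : G.Adj u x := by
          simp only [Finset.mem_erase, SimpleGraph.mem_neighborFinset] at hx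
          exact hx.2
        have hd : ((G.neighborFinset x).erase u).card = G.degree x - 1 := by
          rw [Finset.card_erase_of_mem (by simpa using hxadj.symm),
            G.card_neighborFinset_eq_degree]
        have := G.degree_le_maxDegree x
        omega
    have hle := Finset.card_le_card hBu_sub
    have u1 := Finset.card_union_le (G.neighborFinset u)
      (((G.neighborFinset v).erase u) ∪
      (((G.neighborFinset u).erase v).biUnion (fun x => (G.neighborFinset x).erase u)))
    have u2 := Finset.card_union_le ((G.neighborFinset v).erase u)
      (((G.neighborFinset u).erase v).biUnion (fun x => (G.neighborFinset x).erase u))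
    omega
  have hexb : ∃ b : Fin m, b ∉ Bu.image c1 := by
    by_contra h
    push_neg at h
    have hsub : (Finset.univ : Finset (Fin m)) ⊆ Bu.image c1 := fun b _ => h b
    have := (Finset.card_le_card hsub).trans (Finset.card_image_le)
    simp only [Finset.card_univ, Fintype.card_fin] at this
    omega
  obtain ⟨b, hb⟩ := hexb
  set c2 : V → Fin m := Function.update c1 u b with hc2
  -- this is a valid 2-distance coloring of G, contradicting criticality
  apply hG.1
  refine ⟨c2, ?_⟩
  have key : ∀ x y : V, x ≠ y → x ≠ u → y ≠ u →
      (G.Adj x y ∨ ∃ t, G.Adj x t ∧ G.Adj t y) → c2 x ≠ c2 y := by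
    intro x y hxy hxu hyu hR
    rw [hc2, Function.update_of_ne hxu, Function.update_of_ne hyu]
    by_cases hxv : x = v
    · subst hxv
      have hyBv : y ∈ Bv := by
        simp only [hBv, Finset.mem_filter, Finset.mem_univ, true_and]
        exact ⟨Ne.symm hxy, hyu, hR⟩
      rw [hc1, Function.update_self, Function.update_of_ne (Ne.symm hxy)]
      intro heq
      exact ha (Finset.mem_image.mpr ⟨y, hyBv, heq.symm⟩)
    · by_cases hyv : y = v
      · subst hyv
        have hxBv : x ∈ Bv := by
          simp only [hBv, Finset.mem_filter, Finset.mem_univ, true_and]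
          exact ⟨hxy, hxu, Rsymm _ _ hR⟩
        rw [hc1, Function.update_self, Function.update_of_ne hxy]
        intro heq
        exact ha (Finset.mem_image.mpr ⟨x, hxBv, heq⟩)
      · -- neither is u nor v: use the coloring of G - e
        rw [hc1, Function.update_of_ne hxv, Function.update_of_ne hyv]
        apply hc x y hxy
        have edge_ne : ∀ p q : V, p ≠ v → p ≠ u → G.Adj p q →
            (G.deleteEdges {s(v, u)}).Adj p q ∨ True := fun _ _ _ _ _ => Or.inr trivial
        rcases hR with h | ⟨t, h1, h2⟩
        · left
          rw [SimpleGraph.deleteEdges_adj]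
          refine ⟨h, ?_⟩
          simp only [Set.mem_singleton_iff, Sym2.eq_iff]
          rintro (⟨rfl, rfl⟩ | ⟨rfl, rfl⟩)
          · exact hxv rfl
          · exact hxu rfl
        · right
          refine ⟨t, ?_, ?_⟩
          · rw [SimpleGraph.deleteEdges_adj]
            refine ⟨h1, ?_⟩
            simp only [Set.mem_singleton_iff, Sym2.eq_iff]
            rintro (⟨rfl, rfl⟩ | ⟨rfl, rfl⟩)
            · exact hxv rfl
            · exact hxu rfl
          · rw [SimpleGraph.deleteEdges_adj]
            refine ⟨h2, ?_⟩
            simp only [Set.mem_singleton_iff, Sym2.eq_iff]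
            rintro (⟨rfl, rfl⟩ | ⟨rfl, rfl⟩)
            · exact hyu rfl
            · exact hyv rfl
  intro x y hxy hR
  by_cases hxu : x = u
  · subst hxu
    have hyu : y ≠ x := Ne.symm hxy
    have hyBu : y ∈ Bu := by
      simp only [hBu, Finset.mem_filter, Finset.mem_univ, true_and]
      exact ⟨hyu, hR⟩
    rw [hc2, Function.update_self, Function.update_of_ne hyu]
    intro heq
    exact hb (Finset.mem_image.mpr ⟨y, hyBu, heq.symm⟩)
  · by_cases hyu : y = u
    · subst hyu
      have hxBu : x ∈ Bu := by
        simp only [hBu, Finset.mem_filter, Finset.mem_univ, true_and]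
        exact ⟨hxu, Rsymm _ _ hR⟩
      rw [hc2, Function.update_self, Function.update_of_ne hxu]
      intro heq
      exact hb (Finset.mem_image.mpr ⟨x, hxBu, heq⟩)
    · exact key x y hxy hxu hyu hR
end

section
/- Let G be a (Δ+7)-critical finite simple graph with maximum degree Δ satisfying 7 ≤ Δ ≤ 8 and girth at least 5. Then no vertex of degree 4 in G has three neighbours of degree 2. -/
open Finset

variable {V : Type*}

variable [Fintype V] [DecidableEq V]

lemma exists_avoid {m : ℕ} (s : Finset (Fin m)) (h : s.card < m) : ∃ a : Fin m, a ∉ s := by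
  by_contra hcon
  push_neg at hcon
  have h2 : (Finset.univ : Finset (Fin m)).card ≤ s.card :=
    Finset.card_le_card fun a _ => hcon a
  simp [Finset.card_univ] at h2
  omega

lemma ball_card_le {V : Type*} [Fintype V] [DecidableEq V] (G : SimpleGraph V)
    [DecidableRel G.Adj] (x : V) :
    (Finset.univ.filter (fun y => y ≠ x ∧ (G.Adj x y ∨ ∃ w, G.Adj x w ∧ G.Adj w y))).card
      ≤ G.degree x + ∑ w ∈ G.neighborFinset x, (G.degree w - 1) := by
  have hsub : (Finset.univ.filter (fun y => y ≠ x ∧ (G.Adj x y ∨ ∃ w, G.Adj x w ∧ G.Adj w y)))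
      ⊆ G.neighborFinset x ∪
        (G.neighborFinset x).biUnion (fun w => (G.neighborFinset w).erase x) := by
    intro y hy
    simp only [Finset.mem_filter, Finset.mem_univ, true_and] at hy
    obtain ⟨hne, h | ⟨w, h1, h2⟩⟩ := hy
    · exact Finset.mem_union_left _ ((SimpleGraph.mem_neighborFinset _ _ _).mpr h)
    · refine Finset.mem_union_right _ (Finset.mem_biUnion.mpr ⟨w, ?_, ?_⟩)
      · exact (SimpleGraph.mem_neighborFinset _ _ _).mpr h1
      · exact Finset.mem_erase.mpr ⟨hne, (SimpleGraph.mem_neighborFinset _ _ _).mpr h2⟩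
  calc (Finset.univ.filter
        (fun y => y ≠ x ∧ (G.Adj x y ∨ ∃ w, G.Adj x w ∧ G.Adj w y))).card
      ≤ (G.neighborFinset x ∪
          (G.neighborFinset x).biUnion (fun w => (G.neighborFinset w).erase x)).card :=
        Finset.card_le_card hsub
    _ ≤ (G.neighborFinset x).card +
          ((G.neighborFinset x).biUnion (fun w => (G.neighborFinset w).erase x)).card :=
        Finset.card_union_le _ _
    _ ≤ G.degree x + ∑ w ∈ G.neighborFinset x, ((G.neighborFinset w).erase x).card := by
        rw [SimpleGraph.card_neighborFinset_eq_degree]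
        exact Nat.add_le_add_left Finset.card_biUnion_le _
    _ ≤ G.degree x + ∑ w ∈ G.neighborFinset x, (G.degree w - 1) := by
        refine Nat.add_le_add_left (Finset.sum_le_sum fun w hw => ?_) _
        rw [Finset.card_erase_of_mem
            ((SimpleGraph.mem_neighborFinset _ _ _).mpr
              ((SimpleGraph.mem_neighborFinset _ _ _).mp hw).symm),
          SimpleGraph.card_neighborFinset_eq_degree]

theorem stmt9 (G : SimpleGraph V) [DecidableRel G.Adj]
    (hG : Critical2 G (G.maxDegree + 7))
    (hΔ1 : 7 ≤ G.maxDegree) (hΔ2 : G.maxDegree ≤ 8) (hg : 5 ≤ G.girth) :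
    ¬ ∃ v : V, G.degree v = 4 ∧
      3 ≤ ((G.neighborFinset v).filter (fun u => G.degree u = 2)).card :=  by
  rintro ⟨v, hdv, hS⟩
  obtain ⟨u, hu⟩ := Finset.card_pos.mp (by omega : 0 <
    ((G.neighborFinset v).filter (fun u => G.degree u = 2)).card)
  rw [Finset.mem_filter] at hu
  obtain ⟨huN, hdu⟩ := hu
  have hadj : G.Adj v u := (SimpleGraph.mem_neighborFinset _ _ _).mp huN
  have hvu : v ≠ u := G.ne_of_adj hadj
  obtain ⟨c, hc⟩ := hG.2.2 v u hadj
  set Bv := Finset.univ.filter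
    (fun y => y ≠ v ∧ (G.Adj v y ∨ ∃ w, G.Adj v w ∧ G.Adj w y)) with hBvdef
  set Bu := Finset.univ.filter
    (fun y => y ≠ u ∧ (G.Adj u y ∨ ∃ w, G.Adj u w ∧ G.Adj w y)) with hBudef
  -- bound on the sum over neighbours of v
  have hNv : (G.neighborFinset v).card = 4 := by
    rw [SimpleGraph.card_neighborFinset_eq_degree]; exact hdv
  have hdegle : ∀ w : V, G.degree w ≤ G.maxDegree := fun w => G.degree_le_maxDegree w
  have hsumv : ∑ w ∈ G.neighborFinset v, (G.degree w - 1) ≤ G.maxDegree + 2 := by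
    have hsplit : (∑ w ∈ (G.neighborFinset v).filter (fun u => G.degree u = 2),
          (G.degree w - 1)) +
        ∑ w ∈ (G.neighborFinset v).filter (fun u => ¬ G.degree u = 2), (G.degree w - 1)
        = ∑ w ∈ G.neighborFinset v, (G.degree w - 1) :=
      Finset.sum_filter_add_sum_filter_not (G.neighborFinset v)
        (fun u => G.degree u = 2) (fun w => G.degree w - 1)
    have hcards := Finset.card_filter_add_card_filter_not
      (s := G.neighborFinset v) (p := fun u => G.degree u = 2)
    have hsumS : ∑ w ∈ (G.neighborFinset v).filter (fun u => G.degree u = 2),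
        (G.degree w - 1) = ((G.neighborFinset v).filter (fun u => G.degree u = 2)).card := by
      rw [Finset.sum_congr rfl (fun w hw => ?_), Finset.sum_const, smul_eq_mul, mul_one]
      have : G.degree w = 2 := (Finset.mem_filter.mp hw).2
      omega
    have hsumT : ∑ w ∈ (G.neighborFinset v).filter (fun u => ¬ G.degree u = 2),
        (G.degree w - 1)
        ≤ ((G.neighborFinset v).filter (fun u => ¬ G.degree u = 2)).card * (G.maxDegree - 1) := by
      have := Finset.sum_le_card_nsmul
        ((G.neighborFinset v).filter (fun u => ¬ G.degree u = 2))
        (fun w => G.degree w - 1) (G.maxDegree - 1)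
        (fun w _ => by show G.degree w - 1 ≤ G.maxDegree - 1; have := hdegle w; omega)
      simpa [smul_eq_mul] using this
    have hT01 : ((G.neighborFinset v).filter (fun u => ¬ G.degree u = 2)).card = 0 ∨
        ((G.neighborFinset v).filter (fun u => ¬ G.degree u = 2)).card = 1 := by omega
    rcases hT01 with h | h
    · rw [h, Nat.zero_mul] at hsumT
      omega
    · rw [h, Nat.one_mul] at hsumT
      omega
  have hBv : Bv.card ≤ G.maxDegree + 6 := by
    have := ball_card_le G v
    rw [hdv] at this
    calc Bv.card ≤ 4 + ∑ w ∈ G.neighborFinset v, (G.degree w - 1) := this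
      _ ≤ G.maxDegree + 6 := by omega
  -- bound on the sum over neighbours of u
  have hvNu : v ∈ G.neighborFinset u := (SimpleGraph.mem_neighborFinset _ _ _).mpr hadj.symm
  have hBu : Bu.card ≤ G.maxDegree + 4 := by
    have hball := ball_card_le G u
    rw [hdu] at hball
    have hsplit : (G.degree v - 1) + ∑ w ∈ (G.neighborFinset u).erase v, (G.degree w - 1)
        = ∑ w ∈ G.neighborFinset u, (G.degree w - 1) :=
      Finset.add_sum_erase _ (fun w => G.degree w - 1) hvNu
    have hcarde : ((G.neighborFinset u).erase v).card = 1 := by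
      rw [Finset.card_erase_of_mem hvNu, SimpleGraph.card_neighborFinset_eq_degree, hdu]
    have hsume : ∑ w ∈ (G.neighborFinset u).erase v, (G.degree w - 1)
        ≤ ((G.neighborFinset u).erase v).card * (G.maxDegree - 1) := by
      have := Finset.sum_le_card_nsmul ((G.neighborFinset u).erase v)
        (fun w => G.degree w - 1) (G.maxDegree - 1)
        (fun w _ => by show G.degree w - 1 ≤ G.maxDegree - 1; have := hdegle w; omega)
      simpa [smul_eq_mul] using this
    rw [hcarde, one_mul] at hsume
    calc Bu.card ≤ 2 + ∑ w ∈ G.neighborFinset u, (G.degree w - 1) := hball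
      _ ≤ G.maxDegree + 4 := by omega
  -- choose new colors
  obtain ⟨a, ha⟩ := exists_avoid (Bv.image c)
    (lt_of_le_of_lt (le_trans Finset.card_image_le hBv) (by omega))
  set c1 := Function.update c v a with hc1def
  obtain ⟨b, hb⟩ := exists_avoid (Bu.image c1)
    (lt_of_le_of_lt (le_trans Finset.card_image_le hBu) (by omega))
  set c2 := Function.update c1 u b with hc2def
  have hc2u : c2 u = b := Function.update_self _ _ _
  have hc2v : c2 v = a := by
    rw [hc2def, Function.update_of_ne hvu, hc1def, Function.update_self]
  have hc2other : ∀ y : V, y ≠ u → y ≠ v → c2 y = c y := fun y hyu hyv => by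
    rw [hc2def, Function.update_of_ne hyu, hc1def, Function.update_of_ne hyv]
  have hsym : ∀ x y : V, (G.Adj x y ∨ ∃ w, G.Adj x w ∧ G.Adj w y) →
      (G.Adj y x ∨ ∃ w, G.Adj y w ∧ G.Adj w x) := by
    rintro x y (h | ⟨w, h1, h2⟩)
    · exact Or.inl h.symm
    · exact Or.inr ⟨w, h2.symm, h1.symm⟩
  -- claims
  have hu_claim : ∀ y : V, y ≠ u → (G.Adj u y ∨ ∃ w, G.Adj u w ∧ G.Adj w y) →
      c2 u ≠ c2 y := by
    intro y hy hrel
    have hyBu : y ∈ Bu := by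
      rw [hBudef, Finset.mem_filter]
      exact ⟨Finset.mem_univ _, hy, hrel⟩
    have hcy : c2 y = c1 y := by rw [hc2def, Function.update_of_ne hy]
    rw [hc2u, hcy]
    intro heq
    exact hb (Finset.mem_image.mpr ⟨y, hyBu, heq.symm⟩)
  have hv_claim : ∀ y : V, y ≠ v → y ≠ u → (G.Adj v y ∨ ∃ w, G.Adj v w ∧ G.Adj w y) →
      c2 v ≠ c2 y := by
    intro y hyv hyu hrel
    have hyBv : y ∈ Bv := by
      rw [hBvdef, Finset.mem_filter]
      exact ⟨Finset.mem_univ _, hyv, hrel⟩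
    rw [hc2v, hc2other y hyu hyv]
    intro heq
    exact ha (Finset.mem_image.mpr ⟨y, hyBv, heq.symm⟩)
  have hAdj' : ∀ p q : V, p ≠ u → p ≠ v → G.Adj p q →
      (G.deleteEdges {s(v, u)}).Adj p q := by
    intro p q hpu hpv h
    rw [SimpleGraph.deleteEdges_adj]
    refine ⟨h, ?_⟩
    simp only [Set.mem_singleton_iff, Sym2.eq_iff]
    push_neg
    constructor
    · intro h1; exact absurd h1 hpv
    · intro h1; exact absurd h1 hpu
  apply hG.1
  refine ⟨c2, ?_⟩
  intro x y hxy hrel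
  by_cases hxu : x = u
  · subst hxu; exact hu_claim y (Ne.symm hxy) hrel
  by_cases hyu : y = u
  · subst hyu; exact (hu_claim x hxy (hsym x y hrel)).symm
  by_cases hxv : x = v
  · subst hxv; exact hv_claim y (Ne.symm hxy) hyu hrel
  by_cases hyv : y = v
  · subst hyv; exact Ne.symm (hv_claim x hxy hxu (hsym x y hrel))
  · rw [hc2other x hxu hxv, hc2other y hyu hyv]
    rcases hrel with h | ⟨w, h1, h2⟩
    · exact hc x y hxy (Or.inl (hAdj' x y hxu hxv h))
    · exact hc x y hxy (Or.inr ⟨w, hAdj' x w hxu hxv h1, (hAdj' y w hyu hyv h2.symm).symm⟩)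
end

section
/- Let G be a (Δ+7)-critical finite simple graph with maximum degree Δ satisfying 7 ≤ Δ ≤ 8 and girth at least 5. Then no vertex of degree 5 in G has four neighbours of degree 2. -/
open Finset

variable {V : Type*}

variable [Fintype V] [DecidableEq V]

lemma exists_color_aux {m : ℕ} (s : Finset (Fin m)) (h : s.card < m) : ∃ t : Fin m, t ∉ s := by
  by_contra hc
  push_neg at hc
  have hu : s = Finset.univ := Finset.eq_univ_iff_forall.2 hc
  rw [hu, Finset.card_univ, Fintype.card_fin] at h
  omega

lemma card_insert5_aux {α : Type*} [DecidableEq α] (a b c d e : α) (s : Finset α) :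
    (insert a (insert b (insert c (insert d (insert e s))))).card ≤ s.card + 5 := by
  have i1 := Finset.card_insert_le e s
  have i2 := Finset.card_insert_le d (insert e s)
  have i3 := Finset.card_insert_le c (insert d (insert e s))
  have i4 := Finset.card_insert_le b (insert c (insert d (insert e s)))
  have i5 := Finset.card_insert_le a (insert b (insert c (insert d (insert e s))))
  omega

lemma card_insert2_aux {α : Type*} [DecidableEq α] (a b : α) (s : Finset α) :
    (insert a (insert b s)).card ≤ s.card + 2 := by
  have i1 := Finset.card_insert_le b s
  have i2 := Finset.card_insert_le a (insert b s)
  omega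

lemma mem_nbr_aux (G : SimpleGraph V) [DecidableRel G.Adj] {a b : V} :
    a ∈ G.neighborFinset b ↔ G.Adj b a := by simp

lemma two_nbrs_aux (G : SimpleGraph V) [DecidableRel G.Adj]
    {u v : V} (h2 : G.degree u = 2) (hv : G.Adj u v) :
    ∃ w, w ≠ v ∧ G.neighborFinset u = {v, w} := by
  have hc : (G.neighborFinset u).card = 2 := by
    rw [G.card_neighborFinset_eq_degree]; exact h2
  rw [Finset.card_eq_two] at hc
  obtain ⟨a, b, hab, hs⟩ := hc
  have hvm : v ∈ G.neighborFinset u := (mem_nbr_aux G).2 hv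
  rw [hs] at hvm
  simp only [Finset.mem_insert, Finset.mem_singleton] at hvm
  rcases hvm with rfl | rfl
  · exact ⟨b, hab.symm, hs⟩
  · exact ⟨a, hab, by rw [hs, Finset.pair_comm]⟩

/-- the set of vertices adjacent to `x` or sharing a common neighbour with `x`. -/
def cball2 (G : SimpleGraph V) [DecidableRel G.Adj] (x : V) : Finset V :=
  G.neighborFinset x ∪ (G.neighborFinset x).biUnion (fun y => G.neighborFinset y)

lemma mem_cball2_of_conf (G : SimpleGraph V) [DecidableRel G.Adj]
    {a b : V} (h : G.Adj a b ∨ ∃ x, G.Adj a x ∧ G.Adj x b) :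
    b ∈ cball2 G a ∧ a ∈ cball2 G b := by
  constructor
  · rcases h with h | ⟨x, h1, h2⟩
    · exact Finset.mem_union_left _ ((mem_nbr_aux G).2 h)
    · exact Finset.mem_union_right _ (Finset.mem_biUnion.2
        ⟨x, (mem_nbr_aux G).2 h1, (mem_nbr_aux G).2 h2⟩)
  · rcases h with h | ⟨x, h1, h2⟩
    · exact Finset.mem_union_left _ ((mem_nbr_aux G).2 h.symm)
    · exact Finset.mem_union_right _ (Finset.mem_biUnion.2
        ⟨x, (mem_nbr_aux G).2 h2.symm,
          (mem_nbr_aux G).2 h1.symm⟩)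

set_option maxHeartbeats 1600000 in
theorem stmt10 (G : SimpleGraph V) [DecidableRel G.Adj]
    (hG : Critical2 G (G.maxDegree + 7))
    (hΔ1 : 7 ≤ G.maxDegree) (hΔ2 : G.maxDegree ≤ 8) (hg : 5 ≤ G.girth) :
    ¬ ∃ v : V, G.degree v = 5 ∧
      4 ≤ ((G.neighborFinset v).filter (fun u => G.degree u = 2)).card := by
  rintro ⟨v, hdeg5, hcard⟩
  obtain ⟨T, hTsub, hT4⟩ := Finset.exists_subset_card_eq hcard
  rw [show (4:ℕ) = 3+1 from rfl, Finset.card_eq_succ] at hT4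
  obtain ⟨u1, s3, hu1s, hins, hs3⟩ := hT4
  rw [Finset.card_eq_three] at hs3
  obtain ⟨u2, u3, u4, h23, h24, h34, rfl⟩ := hs3
  have hmemT : ∀ x ∈ T, x ∈ G.neighborFinset v ∧ G.degree x = 2 := by
    intro x hx
    simpa using Finset.mem_filter.mp (hTsub hx)
  have hu1T : u1 ∈ T := by rw [← hins]; simp
  have hu2T : u2 ∈ T := by rw [← hins]; simp
  have hu3T : u3 ∈ T := by rw [← hins]; simp
  have hu4T : u4 ∈ T := by rw [← hins]; simp
  obtain ⟨hn1, hd1⟩ := hmemT u1 hu1T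
  obtain ⟨hn2, hd2⟩ := hmemT u2 hu2T
  obtain ⟨hn3, hd3⟩ := hmemT u3 hu3T
  obtain ⟨hn4, hd4⟩ := hmemT u4 hu4T
  have h12 : u1 ≠ u2 := fun h => hu1s (by simp [h])
  have h13 : u1 ≠ u3 := fun h => hu1s (by simp [h])
  have h14 : u1 ≠ u4 := fun h => hu1s (by simp [h])
  have hadj1 : G.Adj v u1 := (mem_nbr_aux G).1 hn1
  have hadj2 : G.Adj v u2 := (mem_nbr_aux G).1 hn2
  have hadj3 : G.Adj v u3 := (mem_nbr_aux G).1 hn3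
  have hadj4 : G.Adj v u4 := (mem_nbr_aux G).1 hn4
  have hu1v : u1 ≠ v := hadj1.ne'
  have hu2v : u2 ≠ v := hadj2.ne'
  have hu3v : u3 ≠ v := hadj3.ne'
  have hu4v : u4 ≠ v := hadj4.ne'
  have hNcard : (G.neighborFinset v).card = 5 := by
    rw [G.card_neighborFinset_eq_degree]; exact hdeg5
  have hsub4 : ({u1, u2, u3, u4} : Finset V) ⊆ G.neighborFinset v := by
    intro x hx
    simp only [Finset.mem_insert, Finset.mem_singleton] at hx
    rcases hx with rfl | rfl | rfl | rfl <;> assumption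
  have hc4 : ({u1, u2, u3, u4} : Finset V).card = 4 := by
    rw [Finset.card_insert_of_notMem (by simp [h12, h13, h14]),
        Finset.card_insert_of_notMem (by simp [h23, h24]),
        Finset.card_insert_of_notMem (by simp [h34]), Finset.card_singleton]
  have hsd : (G.neighborFinset v \ {u1, u2, u3, u4}).card = 1 := by
    rw [Finset.card_sdiff_of_subset hsub4, hc4, hNcard]
  obtain ⟨u5, hu5⟩ := Finset.card_eq_one.mp hsd
  have hu5m : u5 ∈ G.neighborFinset v \ ({u1, u2, u3, u4} : Finset V) := by
    rw [hu5]; simp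
  have hn5 : u5 ∈ G.neighborFinset v := (Finset.mem_sdiff.1 hu5m).1
  have hNveq : G.neighborFinset v = {u1, u2, u3, u4, u5} := by
    apply Finset.Subset.antisymm
    · intro x hx
      by_cases hx4 : x ∈ ({u1, u2, u3, u4} : Finset V)
      · simp only [Finset.mem_insert, Finset.mem_singleton] at hx4 ⊢
        tauto
      · have hx5 : x ∈ G.neighborFinset v \ {u1, u2, u3, u4} := Finset.mem_sdiff.2 ⟨hx, hx4⟩
        rw [hu5] at hx5
        simp only [Finset.mem_singleton] at hx5
        simp [hx5]
    · intro x hx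
      simp only [Finset.mem_insert, Finset.mem_singleton] at hx
      rcases hx with rfl | rfl | rfl | rfl | rfl <;> assumption
  obtain ⟨w1, hw1v, hNu1⟩ := two_nbrs_aux G hd1 hadj1.symm
  obtain ⟨w2, hw2v, hNu2⟩ := two_nbrs_aux G hd2 hadj2.symm
  obtain ⟨w3, hw3v, hNu3⟩ := two_nbrs_aux G hd3 hadj3.symm
  obtain ⟨w4, hw4v, hNu4⟩ := two_nbrs_aux G hd4 hadj4.symm
  obtain ⟨cind, hcind⟩ := hG.2.1 v
  set c0 : V → Fin (G.maxDegree + 7) :=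
    fun x => if h : x = v then ⟨0, by omega⟩ else cind ⟨x, h⟩ with hc0
  set R : Finset V := {v, u1, u2, u3, u4} with hR
  have hind : ∀ a b : V, a ∉ R → b ∉ R → a ≠ b →
      (G.Adj a b ∨ ∃ x, G.Adj a x ∧ G.Adj x b) → c0 a ≠ c0 b := by
    intro a b haR hbR hab hconf
    simp only [hR, Finset.mem_insert, Finset.mem_singleton] at haR hbR
    push_neg at haR hbR
    obtain ⟨hav, ha1, ha2, ha3, ha4⟩ := haR
    obtain ⟨hbv, hb1, hb2, hb3, hb4⟩ := hbR
    simp only [hc0]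
    rw [dif_neg hav, dif_neg hbv]
    apply hcind ⟨a, hav⟩ ⟨b, hbv⟩ (fun h => hab (congrArg Subtype.val h))
    rcases hconf with h | ⟨x, h1, h2⟩
    · exact Or.inl h
    · by_cases hx : x = v
      · exfalso
        subst hx
        have ha' : a ∈ ({u1, u2, u3, u4, u5} : Finset V) := by
          rw [← hNveq]; exact (mem_nbr_aux G).2 h1.symm
        have hb' : b ∈ ({u1, u2, u3, u4, u5} : Finset V) := by
          rw [← hNveq]; exact (mem_nbr_aux G).2 h2
        simp only [Finset.mem_insert, Finset.mem_singleton] at ha' hb'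
        have ha5 : a = u5 := by
          rcases ha' with h | h | h | h | h
          exacts [absurd h ha1, absurd h ha2, absurd h ha3, absurd h ha4, h]
        have hb5 : b = u5 := by
          rcases hb' with h | h | h | h | h
          exacts [absurd h hb1, absurd h hb2, absurd h hb3, absurd h hb4, h]
        exact hab (ha5.trans hb5.symm)
      · refine Or.inr ⟨⟨x, hx⟩, ?_, ?_⟩
        · exact h1
        · exact h2
  have hdu5 : (G.neighborFinset u5).card ≤ G.maxDegree := by
    rw [G.card_neighborFinset_eq_degree]; exact G.degree_le_maxDegree u5
  have hdw1 : (G.neighborFinset w1).card ≤ G.maxDegree := by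
    rw [G.card_neighborFinset_eq_degree]; exact G.degree_le_maxDegree w1
  have hdw2 : (G.neighborFinset w2).card ≤ G.maxDegree := by
    rw [G.card_neighborFinset_eq_degree]; exact G.degree_le_maxDegree w2
  have hdw3 : (G.neighborFinset w3).card ≤ G.maxDegree := by
    rw [G.card_neighborFinset_eq_degree]; exact G.degree_le_maxDegree w3
  have hdw4 : (G.neighborFinset w4).card ≤ G.maxDegree := by
    rw [G.card_neighborFinset_eq_degree]; exact G.degree_le_maxDegree w4
  have hbv : (cball2 G v \ R).card ≤ G.maxDegree + 5 := by
    have hsub : cball2 G v \ R ⊆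
        insert u5 (insert w1 (insert w2 (insert w3 (insert w4 (G.neighborFinset u5))))) := by
      intro x hx
      rw [Finset.mem_sdiff] at hx
      obtain ⟨hx1, hx2⟩ := hx
      simp only [hR, Finset.mem_insert, Finset.mem_singleton] at hx2
      push_neg at hx2
      obtain ⟨hxv, hxu1, hxu2, hxu3, hxu4⟩ := hx2
      simp only [cball2, Finset.mem_union, Finset.mem_biUnion] at hx1
      simp only [Finset.mem_insert]
      rcases hx1 with h | ⟨y, hy, hxy⟩
      · rw [hNveq] at h
        simp only [Finset.mem_insert, Finset.mem_singleton] at h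
        rcases h with h | h | h | h | h
        exacts [absurd h hxu1, absurd h hxu2, absurd h hxu3, absurd h hxu4, Or.inl h]
      · rw [hNveq] at hy
        simp only [Finset.mem_insert, Finset.mem_singleton] at hy
        rcases hy with rfl | rfl | rfl | rfl | rfl
        · rw [hNu1] at hxy
          simp only [Finset.mem_insert, Finset.mem_singleton] at hxy
          rcases hxy with h | h
          exacts [absurd h hxv, Or.inr (Or.inl h)]
        · rw [hNu2] at hxy
          simp only [Finset.mem_insert, Finset.mem_singleton] at hxy
          rcases hxy with h | h
          exacts [absurd h hxv, Or.inr (Or.inr (Or.inl h))]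
        · rw [hNu3] at hxy
          simp only [Finset.mem_insert, Finset.mem_singleton] at hxy
          rcases hxy with h | h
          exacts [absurd h hxv, Or.inr (Or.inr (Or.inr (Or.inl h)))]
        · rw [hNu4] at hxy
          simp only [Finset.mem_insert, Finset.mem_singleton] at hxy
          rcases hxy with h | h
          exacts [absurd h hxv, Or.inr (Or.inr (Or.inr (Or.inr (Or.inl h))))]
        · exact Or.inr (Or.inr (Or.inr (Or.inr (Or.inr hxy))))
    have := card_insert5_aux u5 w1 w2 w3 w4 (G.neighborFinset u5)
    have := Finset.card_le_card hsub
    omega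
  have hball : ∀ u w : V, G.neighborFinset u = {v, w} →
      cball2 G u \ R ⊆ insert u5 (insert w (G.neighborFinset w)) := by
    intro u w hNu x hx
    rw [Finset.mem_sdiff] at hx
    obtain ⟨hx1, hx2⟩ := hx
    simp only [hR, Finset.mem_insert, Finset.mem_singleton] at hx2
    push_neg at hx2
    obtain ⟨hxv, hxu1, hxu2, hxu3, hxu4⟩ := hx2
    simp only [cball2, Finset.mem_union, Finset.mem_biUnion] at hx1
    simp only [Finset.mem_insert]
    rcases hx1 with h | ⟨y, hy, hxy⟩
    · rw [hNu] at h
      simp only [Finset.mem_insert, Finset.mem_singleton] at h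
      rcases h with h | h
      exacts [absurd h hxv, Or.inr (Or.inl h)]
    · rw [hNu] at hy
      simp only [Finset.mem_insert, Finset.mem_singleton] at hy
      rcases hy with rfl | rfl
      · rw [hNveq] at hxy
        simp only [Finset.mem_insert, Finset.mem_singleton] at hxy
        rcases hxy with h | h | h | h | h
        exacts [absurd h hxu1, absurd h hxu2, absurd h hxu3, absurd h hxu4, Or.inl h]
      · exact Or.inr (Or.inr hxy)
  have hb1 : (cball2 G u1 \ R).card ≤ G.maxDegree + 2 := by
    have h1 := Finset.card_le_card (hball u1 w1 hNu1)
    have h2 := card_insert2_aux u5 w1 (G.neighborFinset w1)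
    omega
  have hb2 : (cball2 G u2 \ R).card ≤ G.maxDegree + 2 := by
    have h1 := Finset.card_le_card (hball u2 w2 hNu2)
    have h2 := card_insert2_aux u5 w2 (G.neighborFinset w2)
    omega
  have hb3 : (cball2 G u3 \ R).card ≤ G.maxDegree + 2 := by
    have h1 := Finset.card_le_card (hball u3 w3 hNu3)
    have h2 := card_insert2_aux u5 w3 (G.neighborFinset w3)
    omega
  have hb4 : (cball2 G u4 \ R).card ≤ G.maxDegree + 2 := by
    have h1 := Finset.card_le_card (hball u4 w4 hNu4)
    have h2 := card_insert2_aux u5 w4 (G.neighborFinset w4)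
    omega
  -- choose the five new colors greedily
  obtain ⟨t0, ht0⟩ := exists_color_aux ((cball2 G v \ R).image c0) (by
    have h1 := Finset.card_image_le (s := cball2 G v \ R) (f := c0)
    omega)
  obtain ⟨t1, ht1⟩ := exists_color_aux (insert t0 ((cball2 G u1 \ R).image c0)) (by
    have h1 := Finset.card_image_le (s := cball2 G u1 \ R) (f := c0)
    have h2 := Finset.card_insert_le t0 ((cball2 G u1 \ R).image c0)
    omega)
  obtain ⟨t2, ht2⟩ := exists_color_aux
      (insert t0 (insert t1 ((cball2 G u2 \ R).image c0))) (by
    have h1 := Finset.card_image_le (s := cball2 G u2 \ R) (f := c0)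
    have h2 := card_insert2_aux t0 t1 ((cball2 G u2 \ R).image c0)
    omega)
  obtain ⟨t3, ht3⟩ := exists_color_aux
      (insert t0 (insert t1 (insert t2 ((cball2 G u3 \ R).image c0)))) (by
    have h1 := Finset.card_image_le (s := cball2 G u3 \ R) (f := c0)
    have h2 := card_insert2_aux t0 t1 (insert t2 ((cball2 G u3 \ R).image c0))
    have h3 := Finset.card_insert_le t2 ((cball2 G u3 \ R).image c0)
    omega)
  obtain ⟨t4, ht4⟩ := exists_color_aux
      (insert t0 (insert t1 (insert t2 (insert t3 ((cball2 G u4 \ R).image c0))))) (by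
    have h1 := Finset.card_image_le (s := cball2 G u4 \ R) (f := c0)
    have h2 := card_insert2_aux t0 t1 (insert t2 (insert t3 ((cball2 G u4 \ R).image c0)))
    have h3 := card_insert2_aux t2 t3 ((cball2 G u4 \ R).image c0)
    omega)
  simp only [Finset.mem_insert, not_or] at ht1 ht2 ht3 ht4
  obtain ⟨hd10, ht1'⟩ := ht1
  obtain ⟨hd20, hd21, ht2'⟩ := ht2
  obtain ⟨hd30, hd31, hd32, ht3'⟩ := ht3
  obtain ⟨hd40, hd41, hd42, hd43, ht4'⟩ := ht4
  have hav0 : ∀ b, b ∈ cball2 G v → b ∉ R → t0 ≠ c0 b := by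
    intro b hm hr heq
    exact ht0 (Finset.mem_image.2 ⟨b, Finset.mem_sdiff.2 ⟨hm, hr⟩, heq.symm⟩)
  have hav1 : ∀ b, b ∈ cball2 G u1 → b ∉ R → t1 ≠ c0 b := by
    intro b hm hr heq
    exact ht1' (Finset.mem_image.2 ⟨b, Finset.mem_sdiff.2 ⟨hm, hr⟩, heq.symm⟩)
  have hav2 : ∀ b, b ∈ cball2 G u2 → b ∉ R → t2 ≠ c0 b := by
    intro b hm hr heq
    exact ht2' (Finset.mem_image.2 ⟨b, Finset.mem_sdiff.2 ⟨hm, hr⟩, heq.symm⟩)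
  have hav3 : ∀ b, b ∈ cball2 G u3 → b ∉ R → t3 ≠ c0 b := by
    intro b hm hr heq
    exact ht3' (Finset.mem_image.2 ⟨b, Finset.mem_sdiff.2 ⟨hm, hr⟩, heq.symm⟩)
  have hav4 : ∀ b, b ∈ cball2 G u4 → b ∉ R → t4 ≠ c0 b := by
    intro b hm hr heq
    exact ht4' (Finset.mem_image.2 ⟨b, Finset.mem_sdiff.2 ⟨hm, hr⟩, heq.symm⟩)
  set c' : V → Fin (G.maxDegree + 7) := fun x =>
    if x = v then t0 else if x = u1 then t1 else if x = u2 then t2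
    else if x = u3 then t3 else if x = u4 then t4 else c0 x with hcp
  have hc'v : c' v = t0 := by simp [hcp]
  have hc'1 : c' u1 = t1 := by simp [hcp, hu1v]
  have hc'2 : c' u2 = t2 := by simp [hcp, hu2v, h12.symm]
  have hc'3 : c' u3 = t3 := by simp [hcp, hu3v, h13.symm, h23.symm]
  have hc'4 : c' u4 = t4 := by simp [hcp, hu4v, h14.symm, h24.symm, h34.symm]
  have hc'out : ∀ x, x ∉ R → c' x = c0 x := by
    intro x hx
    simp only [hR, Finset.mem_insert, Finset.mem_singleton] at hx
    push_neg at hx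
    obtain ⟨h1, h2, h3, h4, h5⟩ := hx
    simp [hcp, h1, h2, h3, h4, h5]
  refine hG.1 ⟨c', ?_⟩
  intro a b hab hconf
  obtain ⟨hbmem, hamem⟩ := mem_cball2_of_conf G hconf
  by_cases haR : a ∈ R
  · by_cases hbR : b ∈ R
    · simp only [hR, Finset.mem_insert, Finset.mem_singleton] at haR hbR
      rcases haR with rfl | rfl | rfl | rfl | rfl <;>
        rcases hbR with rfl | rfl | rfl | rfl | rfl <;>
        simp only [hc'v, hc'1, hc'2, hc'3, hc'4] <;>
        first
          | exact absurd rfl hab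
          | exact hd10 | exact Ne.symm hd10
          | exact hd20 | exact Ne.symm hd20
          | exact hd21 | exact Ne.symm hd21
          | exact hd30 | exact Ne.symm hd30
          | exact hd31 | exact Ne.symm hd31
          | exact hd32 | exact Ne.symm hd32
          | exact hd40 | exact Ne.symm hd40
          | exact hd41 | exact Ne.symm hd41
          | exact hd42 | exact Ne.symm hd42
          | exact hd43 | exact Ne.symm hd43
    · rw [hc'out b hbR]
      simp only [hR, Finset.mem_insert, Finset.mem_singleton] at haR
      rcases haR with rfl | rfl | rfl | rfl | rfl
      · rw [hc'v]; exact hav0 b hbmem hbR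
      · rw [hc'1]; exact hav1 b hbmem hbR
      · rw [hc'2]; exact hav2 b hbmem hbR
      · rw [hc'3]; exact hav3 b hbmem hbR
      · rw [hc'4]; exact hav4 b hbmem hbR
  · by_cases hbR : b ∈ R
    · rw [hc'out a haR]
      simp only [hR, Finset.mem_insert, Finset.mem_singleton] at hbR
      rcases hbR with rfl | rfl | rfl | rfl | rfl
      · rw [hc'v]; exact (hav0 a hamem haR).symm
      · rw [hc'1]; exact (hav1 a hamem haR).symm
      · rw [hc'2]; exact (hav2 a hamem haR).symm
      · rw [hc'3]; exact (hav3 a hamem haR).symm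
      · rw [hc'4]; exact (hav4 a hamem haR).symm
    · rw [hc'out a haR, hc'out b hbR]
      exact hind a b haR hbR hab hconf
end

section
/- Let G be a (Δ+7)-critical finite simple graph with maximum degree Δ satisfying 7 ≤ Δ ≤ 8 and girth at least 5. Then no 3(1)-vertex of G is adjacent to a vertex of degree at most 6 that has a neighbour of degree 2. -/
open Finset

variable {V : Type*}

variable [Fintype V] [DecidableEq V]

set_option linter.unusedSectionVars false

/-- two vertices are adjacent or share a common neighbour. -/
def Reach (G : SimpleGraph V) (x y : V) : Prop :=
  G.Adj x y ∨ ∃ z, G.Adj x z ∧ G.Adj z y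

lemma Reach.symm' {G : SimpleGraph V} {x y : V} (h : Reach G x y) : Reach G y x := by
  rcases h with h | ⟨z, h1, h2⟩
  · exact Or.inl h.symm
  · exact Or.inr ⟨z, h2.symm, h1.symm⟩

/-- the punctured ball of radius 2 (as a Finset). -/
def ball2 (G : SimpleGraph V) [DecidableRel G.Adj] (x : V) : Finset V :=
  G.neighborFinset x ∪ (G.neighborFinset x).biUnion (fun z => G.neighborFinset z)

lemma mem_ball2 {G : SimpleGraph V} [DecidableRel G.Adj] {x y : V} (h : Reach G x y) :
    y ∈ ball2 G x := by
  rcases h with h | ⟨z, h1, h2⟩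
  · exact mem_union_left _ (by simpa using h)
  · exact mem_union_right _ (mem_biUnion.2 ⟨z, by simpa using h1, by simpa using h2⟩)

lemma exists_good_color {m : ℕ} (c : V → Fin m) (F : Finset V) (h : F.card < m) :
    ∃ col : Fin m, ∀ x ∈ F, c x ≠ col := by
  by_contra hc
  push_neg at hc
  have hsub : (univ : Finset (Fin m)) ⊆ F.image c := fun col _ => by
    obtain ⟨x, hx, hcx⟩ := hc col
    exact mem_image.2 ⟨x, hx, hcx⟩
  have h1 := card_le_card hsub
  have h2 := card_image_le (s := F) (f := c)
  simp [card_univ] at h1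
  omega

lemma extend_coloring (G : SimpleGraph V) [DecidableRel G.Adj] {m : ℕ} :
    ∀ (L : List V) (c : V → Fin m),
      (∀ x y, x ∉ L → y ∉ L → x ≠ y → Reach G x y → c x ≠ c y) →
      (∀ (p s : List V) (r : V), L = p ++ r :: s →
        (ball2 G r \ insert r s.toFinset).card < m) →
      Colorable2 G m := by
  intro L
  induction L with
  | nil =>
      intro c h1 _
      exact ⟨c, fun x y hxy hr => h1 x y (by simp) (by simp) hxy hr⟩
  | cons r rest ih =>
      intro c h1 h2
      obtain ⟨col, hcol⟩ := exists_good_color c (ball2 G r \ insert r rest.toFinset)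
        (h2 [] rest r rfl)
      apply ih (Function.update c r col)
      · intro x y hx hy hxy hr
        rcases eq_or_ne x r with rfl | hxr
        · have hy' : y ∈ ball2 G x \ insert x rest.toFinset := by
            refine mem_sdiff.2 ⟨mem_ball2 hr, ?_⟩
            simp only [Finset.mem_insert, List.mem_toFinset, not_or]
            exact ⟨Ne.symm hxy, hy⟩
          have hne := hcol y hy'
          rw [Function.update_of_ne (Ne.symm hxy), Function.update_self]
          exact fun hEq => hne hEq.symm
        · rcases eq_or_ne y r with rfl | hyr
          · have hx' : x ∈ ball2 G y \ insert y rest.toFinset := by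
              refine mem_sdiff.2 ⟨mem_ball2 hr.symm', ?_⟩
              simp only [Finset.mem_insert, List.mem_toFinset, not_or]
              exact ⟨hxy, hx⟩
            rw [Function.update_of_ne hxr, Function.update_self]
            exact hcol x hx'
          · rw [Function.update_of_ne hxr, Function.update_of_ne hyr]
            exact h1 x y (by simp [hx, hxr]) (by simp [hy, hyr]) hxy hr
      · intro p s rr hEq
        exact h2 (r :: p) s rr (by rw [hEq]; rfl)

lemma reach_deleteEdges {G : SimpleGraph V} {p q x y : V}
    (hxp : x ≠ p) (hxq : x ≠ q) (hyp : y ≠ p) (hyq : y ≠ q)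
    (h : Reach G x y) : Reach (G.deleteEdges {s(p, q)}) x y := by
  have key : ∀ a b : V, (a ≠ p ∧ a ≠ q) ∨ (b ≠ p ∧ b ≠ q) → G.Adj a b →
      (G.deleteEdges {s(p, q)}).Adj a b := by
    intro a b hab hAdj
    rw [SimpleGraph.deleteEdges_adj]
    refine ⟨hAdj, ?_⟩
    simp only [Set.mem_singleton_iff]
    intro hEq
    rw [Sym2.eq_iff] at hEq
    rcases hEq with ⟨rfl, rfl⟩ | ⟨rfl, rfl⟩ <;> tauto
  rcases h with h | ⟨z, h1, h2⟩
  · exact Or.inl (key x y (Or.inl ⟨hxp, hxq⟩) h)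
  · exact Or.inr ⟨z, key x z (Or.inl ⟨hxp, hxq⟩) h1, key z y (Or.inr ⟨hyp, hyq⟩) h2⟩

lemma two_nbrs {G : SimpleGraph V} [DecidableRel G.Adj] {x y : V}
    (hx : G.degree x = 2) (hy : G.Adj x y) :
    ∃ z, z ≠ y ∧ G.neighborFinset x = {y, z} := by
  have hcard : (G.neighborFinset x).card = 2 := by
    rw [G.card_neighborFinset_eq_degree]; exact hx
  obtain ⟨p, q, hpq, hset⟩ := Finset.card_eq_two.1 hcard
  have hym : y ∈ G.neighborFinset x := (SimpleGraph.mem_neighborFinset ..).2 hy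
  rw [hset] at hym
  simp only [mem_insert, mem_singleton] at hym
  rcases hym with rfl | rfl
  · exact ⟨q, hpq.symm, hset⟩
  · exact ⟨p, hpq, by rw [hset, pair_comm]⟩

lemma three_nbrs {G : SimpleGraph V} [DecidableRel G.Adj] {v a u : V}
    (hv : G.degree v = 3) (ha : G.Adj v a) (hu : G.Adj v u) (hne : a ≠ u) :
    ∃ b, G.neighborFinset v = {a, u, b} ∧ b ≠ a ∧ b ≠ u := by
  have hcard : (G.neighborFinset v).card = 3 := by
    rw [G.card_neighborFinset_eq_degree]; exact hv
  have hsub : ({a, u} : Finset V) ⊆ G.neighborFinset v := by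
    intro z hz
    simp only [mem_insert, mem_singleton] at hz
    rcases hz with rfl | rfl
    · exact (SimpleGraph.mem_neighborFinset ..).2 ha
    · exact (SimpleGraph.mem_neighborFinset ..).2 hu
  have hdiff : (G.neighborFinset v \ {a, u}).card = 1 := by
    rw [card_sdiff_of_subset hsub, hcard, card_pair hne]
  obtain ⟨b, hb⟩ := Finset.card_eq_one.1 hdiff
  have hbmem : b ∈ G.neighborFinset v \ {a, u} := hb ▸ mem_singleton_self b
  rw [mem_sdiff, mem_insert, mem_singleton] at hbmem
  refine ⟨b, ?_, fun h => hbmem.2 (Or.inl h), fun h => hbmem.2 (Or.inr h)⟩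
  have := Finset.union_sdiff_of_subset hsub
  rw [hb] at this
  rw [← this]
  ext z
  simp only [mem_union, mem_insert, mem_singleton]
  tauto

theorem stmt13 (G : SimpleGraph V) [DecidableRel G.Adj]
    (hG : Critical2 G (G.maxDegree + 7))
    (hΔ1 : 7 ≤ G.maxDegree) (hΔ2 : G.maxDegree ≤ 8) (hg : 5 ≤ G.girth) :
    ∀ v u : V, IsKD G 3 1 v → G.Adj v u → G.degree u ≤ 6 →
      ¬ ∃ w, G.Adj u w ∧ G.degree w = 2 := by
  intro v u hv hadj hu6 hW
  obtain ⟨w, huw, hw2⟩ := hW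
  obtain ⟨a, ha⟩ := Finset.card_eq_one.1 hv.2
  have hamem : a ∈ (G.neighborFinset v).filter (fun u => G.degree u = 2) :=
    ha ▸ mem_singleton_self a
  rw [mem_filter, SimpleGraph.mem_neighborFinset] at hamem
  obtain ⟨hva, ha2⟩ := hamem
  have hdv : G.degree v = 3 := hv.1
  have hvw : v ≠ w := by
    intro h
    rw [h, hw2] at hdv
    exact absurd hdv (by decide)
  apply hG.1
  by_cases hau : a = u
  · -- the degree-2 neighbour of v is u itself; delete the edge aw, recolor w then a
    subst hau
    obtain ⟨c, hc⟩ := hG.2.2 a w huw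
    have hNa : G.neighborFinset a = {v, w} := by
      refine (Finset.eq_of_subset_of_card_le ?_ ?_).symm
      · intro z hz
        simp only [mem_insert, mem_singleton] at hz
        rcases hz with rfl | rfl
        · exact (SimpleGraph.mem_neighborFinset ..).2 hva.symm
        · exact (SimpleGraph.mem_neighborFinset ..).2 huw
      · rw [G.card_neighborFinset_eq_degree, ha2, card_pair hvw]
    obtain ⟨w', hw'a, hNw⟩ := two_nbrs hw2 huw.symm
    apply extend_coloring G [w, a] c
    · intro x y hx hy hxy hr
      simp only [List.mem_cons, List.not_mem_nil, or_false, not_or] at hx hy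
      exact hc x y hxy (reach_deleteEdges hx.2 hx.1 hy.2 hy.1 hr)
    · intro p s r hEq
      rcases p with _ | ⟨x1, p⟩
      · rw [List.nil_append, List.cons.injEq] at hEq
        obtain ⟨rfl, rfl⟩ := hEq
        -- recolor w: forbidden ⊆ (N w \ {a}) ∪ (N a \ {w}) ∪ (N w' \ {w})
        have hset : insert w ([a] : List V).toFinset = ({w, a} : Finset V) := by
          ext z; simp
        rw [hset]
        have hsub : ball2 G w \ {w, a} ⊆
            (G.neighborFinset w \ {a}) ∪ (G.neighborFinset a \ {w}) ∪
              (G.neighborFinset w' \ {w}) := by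
          intro y hy
          rw [mem_sdiff] at hy
          obtain ⟨hyT, hyN⟩ := hy
          simp only [mem_insert, mem_singleton, not_or] at hyN
          obtain ⟨hyw, hya⟩ := hyN
          simp only [mem_union, mem_sdiff, mem_singleton]
          rcases mem_union.1 hyT with h | h
          · exact Or.inl (Or.inl ⟨h, hya⟩)
          · obtain ⟨x, hx, hyx⟩ := mem_biUnion.1 h
            rw [hNw] at hx
            simp only [mem_insert, mem_singleton] at hx
            rcases hx with rfl | rfl
            · exact Or.inl (Or.inr ⟨hyx, hyw⟩)
            · exact Or.inr ⟨hyx, hyw⟩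
        have k1 := card_le_card hsub
        have k2 := card_union_le ((G.neighborFinset w \ {a}) ∪ (G.neighborFinset a \ {w}))
          (G.neighborFinset w' \ {w})
        have k3 := card_union_le (G.neighborFinset w \ {a}) (G.neighborFinset a \ {w})
        have b1 : (G.neighborFinset w \ {a}).card ≤ 2 := by
          calc (G.neighborFinset w \ {a}).card ≤ (G.neighborFinset w).card :=
                card_le_card sdiff_subset
            _ = 2 := by rw [G.card_neighborFinset_eq_degree, hw2]
        have b2 : (G.neighborFinset a \ {w}).card ≤ 2 := by
          calc (G.neighborFinset a \ {w}).card ≤ (G.neighborFinset a).card :=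
                card_le_card sdiff_subset
            _ = 2 := by rw [G.card_neighborFinset_eq_degree, ha2]
        have b3 : (G.neighborFinset w' \ {w}).card ≤ G.maxDegree := by
          calc (G.neighborFinset w' \ {w}).card ≤ (G.neighborFinset w').card :=
                card_le_card sdiff_subset
            _ = G.degree w' := G.card_neighborFinset_eq_degree w'
            _ ≤ G.maxDegree := G.degree_le_maxDegree w'
        omega
      · rw [List.cons_append, List.cons.injEq] at hEq
        obtain ⟨rfl, hEq⟩ := hEq
        rcases p with _ | ⟨x2, p⟩
        · rw [List.nil_append, List.cons.injEq] at hEq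
          obtain ⟨rfl, rfl⟩ := hEq
          -- recolor a: forbidden ⊆ N a ∪ N v ∪ N w, tiny
          have hsub : ball2 G a \ insert a ([] : List V).toFinset ⊆
              G.neighborFinset a ∪ (G.neighborFinset v ∪ G.neighborFinset w) := by
            intro y hy
            have hyT := (mem_sdiff.1 hy).1
            rcases mem_union.1 hyT with h | h
            · exact mem_union_left _ h
            · obtain ⟨x, hx, hyx⟩ := mem_biUnion.1 h
              rw [hNa] at hx
              simp only [mem_insert, mem_singleton] at hx
              rcases hx with rfl | rfl
              · exact mem_union_right _ (mem_union_left _ hyx)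
              · exact mem_union_right _ (mem_union_right _ hyx)
          have k1 := card_le_card hsub
          have k2 := card_union_le (G.neighborFinset a)
            (G.neighborFinset v ∪ G.neighborFinset w)
          have k3 := card_union_le (G.neighborFinset v) (G.neighborFinset w)
          have b1 : (G.neighborFinset a).card = 2 := by
            rw [G.card_neighborFinset_eq_degree, ha2]
          have b2 : (G.neighborFinset v).card = 3 := by
            rw [G.card_neighborFinset_eq_degree, hdv]
          have b3 : (G.neighborFinset w).card = 2 := by
            rw [G.card_neighborFinset_eq_degree, hw2]
          omega
        · exfalso
          rw [List.cons_append, List.cons.injEq] at hEq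
          exact absurd hEq.2 (by simp)
  · -- main case: delete the edge va, recolor v, a, w
    obtain ⟨c, hc⟩ := hG.2.2 v a hva
    obtain ⟨b, hNv, hba, hbu⟩ := three_nbrs hdv hva hadj hau
    obtain ⟨a', ha'v, hNa⟩ := two_nbrs ha2 hva.symm
    obtain ⟨w', hw'u, hNw⟩ := two_nbrs hw2 huw.symm
    apply extend_coloring G [v, a, w] c
    · intro x y hx hy hxy hr
      simp only [List.mem_cons, List.not_mem_nil, or_false, not_or] at hx hy
      exact hc x y hxy (reach_deleteEdges hx.1 hx.2.1 hy.1 hy.2.1 hr)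
    · intro p s r hEq
      rcases p with _ | ⟨x1, p⟩
      · rw [List.nil_append, List.cons.injEq] at hEq
        obtain ⟨rfl, rfl⟩ := hEq
        -- recolor v
        have hset : insert v ([a, w] : List V).toFinset = ({v, a, w} : Finset V) := by
          ext z; simp
        rw [hset]
        have hsub : ball2 G v \ {v, a, w} ⊆
            (G.neighborFinset v \ {a}) ∪ (G.neighborFinset a \ {v}) ∪
              (G.neighborFinset u \ {v, w}) ∪ (G.neighborFinset b \ {v}) := by
          intro y hy
          rw [mem_sdiff] at hy
          obtain ⟨hyT, hyN⟩ := hy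
          simp only [mem_insert, mem_singleton, not_or] at hyN
          obtain ⟨hyv, hya, hyw⟩ := hyN
          simp only [mem_union, mem_sdiff, mem_insert, mem_singleton, not_or]
          rcases mem_union.1 hyT with h | h
          · exact Or.inl (Or.inl (Or.inl ⟨h, hya⟩))
          · obtain ⟨x, hx, hyx⟩ := mem_biUnion.1 h
            rw [hNv] at hx
            simp only [mem_insert, mem_singleton] at hx
            rcases hx with rfl | rfl | rfl
            · exact Or.inl (Or.inl (Or.inr ⟨hyx, hyv⟩))
            · exact Or.inl (Or.inr ⟨hyx, hyv, hyw⟩)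
            · exact Or.inr ⟨hyx, hyv⟩
        have k1 := card_le_card hsub
        have k2 := card_union_le
          ((G.neighborFinset v \ {a}) ∪ (G.neighborFinset a \ {v}) ∪
            (G.neighborFinset u \ {v, w})) (G.neighborFinset b \ {v})
        have k3 := card_union_le
          ((G.neighborFinset v \ {a}) ∪ (G.neighborFinset a \ {v}))
          (G.neighborFinset u \ {v, w})
        have k4 := card_union_le (G.neighborFinset v \ {a}) (G.neighborFinset a \ {v})
        have b1 : (G.neighborFinset v \ {a}).card = 2 := by
          rw [card_sdiff_of_subset (singleton_subset_iff.2 ((SimpleGraph.mem_neighborFinset ..).2 hva)),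
            G.card_neighborFinset_eq_degree, hdv, card_singleton]
        have b2 : (G.neighborFinset a \ {v}).card = 1 := by
          rw [card_sdiff_of_subset (singleton_subset_iff.2 ((SimpleGraph.mem_neighborFinset ..).2 hva.symm)),
            G.card_neighborFinset_eq_degree, ha2, card_singleton]
        have b3 : (G.neighborFinset u \ {v, w}).card ≤ 4 := by
          have hsub2 : ({v, w} : Finset V) ⊆ G.neighborFinset u := by
            intro z hz
            simp only [mem_insert, mem_singleton] at hz
            rcases hz with rfl | rfl
            · exact (SimpleGraph.mem_neighborFinset ..).2 hadj.symm
            · exact (SimpleGraph.mem_neighborFinset ..).2 huw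
          rw [card_sdiff_of_subset hsub2, G.card_neighborFinset_eq_degree, card_pair hvw]
          omega
        have b4 : (G.neighborFinset b \ {v}).card + 1 ≤ G.maxDegree := by
          have hbv : v ∈ G.neighborFinset b := by
            refine (SimpleGraph.mem_neighborFinset ..).2 ?_
            have : b ∈ G.neighborFinset v := by rw [hNv]; simp
            exact ((SimpleGraph.mem_neighborFinset ..).1 this).symm
          rw [card_sdiff_of_subset (singleton_subset_iff.2 hbv), G.card_neighborFinset_eq_degree,
            card_singleton]
          have h1 : 1 ≤ G.degree b := by
            rw [← G.card_neighborFinset_eq_degree]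
            exact card_pos.2 ⟨v, hbv⟩
          have h2 := G.degree_le_maxDegree b
          omega
        omega
      · rw [List.cons_append, List.cons.injEq] at hEq
        obtain ⟨rfl, hEq⟩ := hEq
        rcases p with _ | ⟨x2, p⟩
        · rw [List.nil_append, List.cons.injEq] at hEq
          obtain ⟨rfl, rfl⟩ := hEq
          -- recolor a: forbidden ⊆ N a ∪ N v ∪ N a'
          have hsub : ball2 G a \ insert a ([w] : List V).toFinset ⊆
              G.neighborFinset a ∪ (G.neighborFinset v ∪ G.neighborFinset a') := by
            intro y hy
            have hyT := (mem_sdiff.1 hy).1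
            rcases mem_union.1 hyT with h | h
            · exact mem_union_left _ h
            · obtain ⟨x, hx, hyx⟩ := mem_biUnion.1 h
              rw [hNa] at hx
              simp only [mem_insert, mem_singleton] at hx
              rcases hx with rfl | rfl
              · exact mem_union_right _ (mem_union_left _ hyx)
              · exact mem_union_right _ (mem_union_right _ hyx)
          have k1 := card_le_card hsub
          have k2 := card_union_le (G.neighborFinset a)
            (G.neighborFinset v ∪ G.neighborFinset a')
          have k3 := card_union_le (G.neighborFinset v) (G.neighborFinset a')
          have b1 : (G.neighborFinset a).card = 2 := by
            rw [G.card_neighborFinset_eq_degree, ha2]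
          have b2 : (G.neighborFinset v).card = 3 := by
            rw [G.card_neighborFinset_eq_degree, hdv]
          have b3 : (G.neighborFinset a').card ≤ G.maxDegree := by
            rw [G.card_neighborFinset_eq_degree]
            exact G.degree_le_maxDegree a'
          omega
        · rw [List.cons_append, List.cons.injEq] at hEq
          obtain ⟨rfl, hEq⟩ := hEq
          rcases p with _ | ⟨x3, p⟩
          · rw [List.nil_append, List.cons.injEq] at hEq
            obtain ⟨rfl, rfl⟩ := hEq
            -- recolor w: forbidden ⊆ N w ∪ (N u \ {w}) ∪ (N w' \ {w})
            have hsub : ball2 G w \ insert w ([] : List V).toFinset ⊆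
                G.neighborFinset w ∪ ((G.neighborFinset u \ {w}) ∪
                  (G.neighborFinset w' \ {w})) := by
              intro y hy
              rw [mem_sdiff] at hy
              obtain ⟨hyT, hyN⟩ := hy
              have hyw : y ≠ w := by
                intro h; exact hyN (by simp [h])
              rcases mem_union.1 hyT with h | h
              · exact mem_union_left _ h
              · obtain ⟨x, hx, hyx⟩ := mem_biUnion.1 h
                rw [hNw] at hx
                simp only [mem_insert, mem_singleton] at hx
                rcases hx with rfl | rfl
                · exact mem_union_right _ (mem_union_left _
                    (mem_sdiff.2 ⟨hyx, by simpa using hyw⟩))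
                · exact mem_union_right _ (mem_union_right _
                    (mem_sdiff.2 ⟨hyx, by simpa using hyw⟩))
            have k1 := card_le_card hsub
            have k2 := card_union_le (G.neighborFinset w)
              ((G.neighborFinset u \ {w}) ∪ (G.neighborFinset w' \ {w}))
            have k3 := card_union_le (G.neighborFinset u \ {w})
              (G.neighborFinset w' \ {w})
            have b1 : (G.neighborFinset w).card = 2 := by
              rw [G.card_neighborFinset_eq_degree, hw2]
            have b2 : (G.neighborFinset u \ {w}).card + 1 ≤ 6 := by
              rw [card_sdiff_of_subset (singleton_subset_iff.2
                ((SimpleGraph.mem_neighborFinset ..).2 huw)),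
                G.card_neighborFinset_eq_degree, card_singleton]
              have h1 : 1 ≤ G.degree u := by
                rw [← G.card_neighborFinset_eq_degree]
                exact card_pos.2 ⟨w, (SimpleGraph.mem_neighborFinset ..).2 huw⟩
              omega
            have b3 : (G.neighborFinset w' \ {w}).card + 1 ≤ G.maxDegree := by
              have hwm : w ∈ G.neighborFinset w' := by
                refine (SimpleGraph.mem_neighborFinset ..).2 ?_
                have : w' ∈ G.neighborFinset w := by rw [hNw]; simp
                exact ((SimpleGraph.mem_neighborFinset ..).1 this).symm
              rw [card_sdiff_of_subset (singleton_subset_iff.2 hwm),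
                G.card_neighborFinset_eq_degree, card_singleton]
              have h1 : 1 ≤ G.degree w' := by
                rw [← G.card_neighborFinset_eq_degree]
                exact card_pos.2 ⟨w, hwm⟩
              have h2 := G.degree_le_maxDegree w'
              omega
            omega
          · exfalso
            rw [List.cons_append, List.cons.injEq] at hEq
            exact absurd hEq.2 (by simp)
end

section
/- Let G be a (Δ+6)-critical finite simple graph with maximum degree Δ ≥ 10 and girth at least 5. If a vertex of degree 3 has a neighbour of degree 2, then its other two neighbours both have degree at least 5. -/
open Finset

variable {V : Type*}

variable [Fintype V] [DecidableEq V]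

section Aux

variable [Fintype V] [DecidableEq V]

private lemma ball_bound (G : SimpleGraph V) [DecidableRel G.Adj] (v : V)
    [DecidablePred fun x => x ≠ v ∧ (G.Adj v x ∨ ∃ z, G.Adj v z ∧ G.Adj z x)] :
    (univ.filter fun x => x ≠ v ∧ (G.Adj v x ∨ ∃ z, G.Adj v z ∧ G.Adj z x)).card ≤
      G.degree v + ∑ y ∈ G.neighborFinset v, (G.degree y - 1) := by
  classical
  have hsub : (univ.filter fun x => x ≠ v ∧ (G.Adj v x ∨ ∃ z, G.Adj v z ∧ G.Adj z x)) ⊆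
      G.neighborFinset v ∪
        (G.neighborFinset v).biUnion fun y => (G.neighborFinset y).erase v := by
    intro x hx
    simp only [mem_filter, mem_univ, true_and] at hx
    obtain ⟨hxv, hadj | ⟨z, hvz, hzx⟩⟩ := hx
    · exact mem_union_left _ (by simpa [SimpleGraph.mem_neighborFinset] using hadj)
    · refine mem_union_right _ (Finset.mem_biUnion.mpr ⟨z, ?_, ?_⟩)
      · simpa [SimpleGraph.mem_neighborFinset] using hvz
      · exact Finset.mem_erase.mpr ⟨hxv, by simpa [SimpleGraph.mem_neighborFinset] using hzx⟩
  calc (univ.filter fun x => x ≠ v ∧ (G.Adj v x ∨ ∃ z, G.Adj v z ∧ G.Adj z x)).card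
      ≤ (G.neighborFinset v ∪
          (G.neighborFinset v).biUnion fun y => (G.neighborFinset y).erase v).card :=
        Finset.card_le_card hsub
    _ ≤ (G.neighborFinset v).card +
          ∑ y ∈ G.neighborFinset v, ((G.neighborFinset y).erase v).card :=
        le_trans (Finset.card_union_le _ _) (by gcongr; exact Finset.card_biUnion_le)
    _ ≤ G.degree v + ∑ y ∈ G.neighborFinset v, (G.degree y - 1) := by
        rw [SimpleGraph.card_neighborFinset_eq_degree]
        gcongr with y hy
        rw [Finset.card_erase_of_mem (by
          simpa [SimpleGraph.mem_neighborFinset] using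
            ((SimpleGraph.mem_neighborFinset _ _ _).mp hy).symm)]
        exact Nat.sub_le_sub_right (le_of_eq (SimpleGraph.card_neighborFinset_eq_degree G y)) 1

private lemma prox_delete {G : SimpleGraph V} {v u x y : V}
    (hxv : x ≠ v) (hxu : x ≠ u) (hyv : y ≠ v) (hyu : y ≠ u)
    (h : G.Adj x y ∨ ∃ z, G.Adj x z ∧ G.Adj z y) :
    (G.deleteEdges {s(v,u)}).Adj x y ∨
      ∃ z, (G.deleteEdges {s(v,u)}).Adj x z ∧ (G.deleteEdges {s(v,u)}).Adj z y := by
  have key : ∀ a b : V, a ≠ v → a ≠ u → G.Adj a b → (G.deleteEdges {s(v,u)}).Adj a b := by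
    intro a b hav hau hab
    rw [SimpleGraph.deleteEdges_adj]
    refine ⟨hab, ?_⟩
    simp only [Set.mem_singleton_iff, Sym2.eq_iff]
    rintro (⟨rfl, rfl⟩ | ⟨rfl, rfl⟩) <;> simp_all
  rcases h with h | ⟨z, h1, h2⟩
  · exact Or.inl (key x y hxv hxu h)
  · exact Or.inr ⟨z, key x z hxv hxu h1, (key y z hyv hyu h2.symm).symm⟩

private lemma exists_color {m : ℕ} (s : Finset (Fin m)) (hs : s.card < m) : ∃ a, a ∉ s := by
  by_contra h
  push_neg at h
  have : (univ : Finset (Fin m)) ⊆ s := fun a _ => h a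
  have := Finset.card_le_card this
  simp [Finset.card_univ] at this
  omega

end Aux

theorem stmt16 (G : SimpleGraph V) [DecidableRel G.Adj]
    (hG : Critical2 G (G.maxDegree + 6))
    (hΔ : 10 ≤ G.maxDegree) (hg : 5 ≤ G.girth) :
    ∀ v u : V, G.degree v = 3 → G.Adj v u → G.degree u = 2 →
      ∀ w : V, G.Adj v w → w ≠ u → 5 ≤ G.degree w := by
  classical
  intro v u hv3 hvu hu2 w hvw hwu
  by_contra hlt
  push_neg at hlt
  have hw4 : G.degree w ≤ 4 := by omega
  set m := G.maxDegree + 6 with hm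
  obtain ⟨c, hc⟩ := hG.2.2 v u hvu
  have hvne : v ≠ u := hvu.ne
  -- neighbor sum bounds
  have hdeg : ∀ y : V, G.degree y ≤ G.maxDegree := fun y => G.degree_le_maxDegree y
  have humem : u ∈ G.neighborFinset v := (G.mem_neighborFinset v u).mpr hvu
  have hwmem : w ∈ G.neighborFinset v := (G.mem_neighborFinset v w).mpr hvw
  have hvmem : v ∈ G.neighborFinset u := (G.mem_neighborFinset u v).mpr hvu.symm
  have hcardv : (G.neighborFinset v).card = 3 := by
    rw [G.card_neighborFinset_eq_degree]; exact hv3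
  have hcardu : (G.neighborFinset u).card = 2 := by
    rw [G.card_neighborFinset_eq_degree]; exact hu2
  -- sum over N(v) of (deg - 1) ≤ Δ + 3
  have hsumv : ∑ y ∈ G.neighborFinset v, (G.degree y - 1) ≤ G.maxDegree + 3 := by
    rw [← Finset.add_sum_erase _ _ humem]
    have hwmem' : w ∈ (G.neighborFinset v).erase u := Finset.mem_erase.mpr ⟨hwu, hwmem⟩
    rw [← Finset.add_sum_erase _ _ hwmem']
    have h1 : (((G.neighborFinset v).erase u).erase w).card = 1 := by
      rw [Finset.card_erase_of_mem hwmem', Finset.card_erase_of_mem humem, hcardv]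
    have h2 := Finset.sum_le_card_nsmul (((G.neighborFinset v).erase u).erase w)
      (fun y => G.degree y - 1) (G.maxDegree - 1)
      (fun y _ => Nat.sub_le_sub_right (hdeg y) 1)
    rw [h1, smul_eq_mul] at h2
    have := hdeg w
    omega
  -- sum over N(u) of (deg - 1) ≤ Δ + 1
  have hsumu : ∑ y ∈ G.neighborFinset u, (G.degree y - 1) ≤ G.maxDegree + 1 := by
    rw [← Finset.add_sum_erase _ _ hvmem]
    have h1 : ((G.neighborFinset u).erase v).card = 1 := by
      rw [Finset.card_erase_of_mem hvmem, hcardu]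
    have h2 := Finset.sum_le_card_nsmul ((G.neighborFinset u).erase v)
      (fun y => G.degree y - 1) (G.maxDegree - 1)
      (fun y _ => Nat.sub_le_sub_right (hdeg y) 1)
    rw [h1, smul_eq_mul] at h2
    omega
  -- the balls
  set Bv : Finset V := univ.filter fun x => x ≠ v ∧ (G.Adj v x ∨ ∃ z, G.Adj v z ∧ G.Adj z x)
    with hBv
  set Bu : Finset V := univ.filter fun x => x ≠ u ∧ (G.Adj u x ∨ ∃ z, G.Adj u z ∧ G.Adj z x)
    with hBu
  have hBvcard : Bv.card ≤ G.maxDegree + 6 := by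
    have h := ball_bound G v
    rw [← hBv] at h
    omega
  have hBucard : Bu.card ≤ G.maxDegree + 3 := by
    have h := ball_bound G u
    rw [← hBu] at h
    omega
  have humemBv : u ∈ Bv := by
    simp only [hBv, mem_filter, mem_univ, true_and]
    exact ⟨fun h => hvne h.symm, Or.inl hvu⟩
  have hBv'card : (Bv.erase u).card ≤ G.maxDegree + 5 := by
    rw [Finset.card_erase_of_mem humemBv]
    omega
  -- choose color for v
  obtain ⟨a, ha⟩ := exists_color ((Bv.erase u).image c)
    (lt_of_le_of_lt (le_trans (Finset.card_image_le) hBv'card) (by omega))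
  set c1 : V → Fin m := Function.update c v a with hc1
  -- choose color for u
  obtain ⟨b, hb⟩ := exists_color (Bu.image c1)
    (lt_of_le_of_lt (le_trans (Finset.card_image_le) hBucard) (by omega))
  set c2 : V → Fin m := Function.update c1 u b with hc2
  have hc2u : c2 u = b := Function.update_self u b c1
  have hc2' : ∀ x, x ≠ u → c2 x = c1 x := fun x hx => Function.update_of_ne hx b c1
  have hc1v : c1 v = a := Function.update_self v a c
  have hc1' : ∀ x, x ≠ v → c1 x = c x := fun x hx => Function.update_of_ne hx a c
  -- symmetrized proximity
  have prox_symm : ∀ x y : V, (G.Adj x y ∨ ∃ z, G.Adj x z ∧ G.Adj z y) →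
      (G.Adj y x ∨ ∃ z, G.Adj y z ∧ G.Adj z x) := by
    rintro x y (h | ⟨z, h1, h2⟩)
    · exact Or.inl h.symm
    · exact Or.inr ⟨z, h2.symm, h1.symm⟩
  -- u avoids everyone in Bu (wrt c1)
  have hub : ∀ y, y ≠ u → (G.Adj u y ∨ ∃ z, G.Adj u z ∧ G.Adj z y) → b ≠ c1 y := by
    intro y hyu hprox hby
    exact hb (Finset.mem_image.mpr ⟨y, by
      simp only [hBu, mem_filter, mem_univ, true_and]; exact ⟨hyu, hprox⟩, hby.symm⟩)
  -- v avoids everyone in Bv \ {u} (wrt c)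
  have hva : ∀ y, y ≠ v → y ≠ u → (G.Adj v y ∨ ∃ z, G.Adj v z ∧ G.Adj z y) → a ≠ c y := by
    intro y hyv hyu hprox hay
    exact ha (Finset.mem_image.mpr ⟨y, Finset.mem_erase.mpr ⟨hyu, by
      simp only [hBv, mem_filter, mem_univ, true_and]; exact ⟨hyv, hprox⟩⟩, hay.symm⟩)
  refine absurd ⟨c2, ?_⟩ hG.1
  intro x y hxy hprox
  by_cases hxu : x = u
  · subst hxu
    rw [hc2u, hc2' y (Ne.symm hxy)]
    exact hub y (Ne.symm hxy) hprox
  · by_cases hyu : y = u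
    · rw [hyu, hc2u, hc2' x hxu]
      exact (hub x hxu (prox_symm x u (hyu ▸ hprox))).symm
    · rw [hc2' x hxu, hc2' y hyu]
      by_cases hxv : x = v
      · subst hxv
        rw [hc1v, hc1' y (Ne.symm hxy)]
        exact hva y (Ne.symm hxy) hyu hprox
      · by_cases hyv : y = v
        · rw [hyv, hc1v, hc1' x hxv]
          exact (hva x hxv hxu (prox_symm x v (hyv ▸ hprox))).symm
        · rw [hc1' x hxv, hc1' y hyv]
          exact hc x y hxy (prox_delete hxv hxu hyv hyu hprox)
end

section
/- Let G be a (Δ+6)-critical finite simple graph with maximum degree Δ ≥ 10 and girth at least 5. Then no 3(1)-vertex of G is adjacent to a vertex of degree at most 5 that has a neighbour of degree 2. -/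
open Finset

variable {V : Type*}

variable [Fintype V] [DecidableEq V]

/-- Greedy extension of a partial 2-distance coloring to one more vertex, provided
the colored vertices within distance 2 are contained in a finset of size `< m`. -/
lemma extend_coloring_s18 (G : SimpleGraph V) {m : ℕ}
    (T : Set V) (c : V → Fin m) (hc : IsPartial2Coloring G T c)
    (z : V) (hz : z ∉ T) (F : Finset V)
    (hF : ∀ y ∈ T, (G.Adj z y ∨ ∃ x, G.Adj z x ∧ G.Adj x y) → y ∈ F)
    (hcard : F.card < m) :
    ∃ c' : V → Fin m, IsPartial2Coloring G (insert z T) c' ∧ ∀ y ∈ T, c' y = c y := by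
  have h1 : (F.image c).card < m := lt_of_le_of_lt Finset.card_image_le hcard
  have h2 : ∃ γ : Fin m, γ ∉ F.image c := by
    by_contra h
    push_neg at h
    have hsub : (Finset.univ : Finset (Fin m)) ⊆ F.image c := fun γ _ => h γ
    have := Finset.card_le_card hsub
    rw [Finset.card_univ, Fintype.card_fin] at this
    omega
  obtain ⟨γ, hγ⟩ := h2
  have hupz : Function.update c z γ z = γ := Function.update_self _ _ _
  refine ⟨Function.update c z γ, ?_, ?_⟩
  · intro a ha b hb hab hrel
    have hsymmrel : ∀ p q : V,
        (G.Adj p q ∨ ∃ x, G.Adj p x ∧ G.Adj x q) →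
        (G.Adj q p ∨ ∃ x, G.Adj q x ∧ G.Adj x p) := by
      rintro p q (h | ⟨x, h1', h2'⟩)
      · exact Or.inl h.symm
      · exact Or.inr ⟨x, h2'.symm, h1'.symm⟩
    have key : ∀ b' ∈ T, (G.Adj z b' ∨ ∃ x, G.Adj z x ∧ G.Adj x b') →
        Function.update c z γ z ≠ Function.update c z γ b' := by
      intro b' hb' hrel'
      have hb'z : b' ≠ z := fun h => hz (by rw [← h]; exact hb')
      rw [hupz, Function.update_of_ne hb'z]
      intro h
      refine hγ ?_
      rw [h]
      exact Finset.mem_image_of_mem c (hF b' hb' hrel')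
    rcases Set.mem_insert_iff.mp ha with ha' | haT
    · rcases Set.mem_insert_iff.mp hb with hb' | hbT
      · exact absurd (ha'.trans hb'.symm) hab
      · rw [ha'] at hrel ⊢
        exact key b hbT hrel
    · rcases Set.mem_insert_iff.mp hb with hb' | hbT
      · rw [hb'] at hrel ⊢
        exact (key a haT (hsymmrel _ _ hrel)).symm
      · have haz : a ≠ z := fun h => hz (by rw [← h]; exact haT)
        have hbz : b ≠ z := fun h => hz (by rw [← h]; exact hbT)
        rw [Function.update_of_ne haz, Function.update_of_ne hbz]
        exact hc a haT b hbT hab hrel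
  · intro y hy
    exact Function.update_of_ne (fun h => hz (by rw [← h]; exact hy)) _ _

theorem stmt18 (G : SimpleGraph V) [DecidableRel G.Adj]
    (hG : Critical2 G (G.maxDegree + 6))
    (hΔ : 10 ≤ G.maxDegree) (hg : 5 ≤ G.girth) :
    ∀ v u : V, IsKD G 3 1 v → G.Adj v u → G.degree u ≤ 5 →
      ¬ ∃ w, G.Adj u w ∧ G.degree w = 2 := by
  intro v u hv huv hdu
  rintro ⟨w, huw, hdw⟩
  set m := G.maxDegree + 6 with hm
  have hΔy : ∀ y : V, G.degree y ≤ G.maxDegree := fun y => G.degree_le_maxDegree y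
  obtain ⟨hdv, hfilter⟩ := hv
  obtain ⟨t, ht⟩ := Finset.card_eq_one.mp hfilter
  have htmem : t ∈ G.neighborFinset v ∧ G.degree t = 2 := by
    have h1 : t ∈ (G.neighborFinset v).filter (fun u => G.degree u = 2) := by
      rw [ht]; exact Finset.mem_singleton_self t
    exact Finset.mem_filter.mp h1
  have hvt : G.Adj v t := (SimpleGraph.mem_neighborFinset G v t).mp htmem.1
  have hdt : G.degree t = 2 := htmem.2
  -- edges surviving the deletion of one edge
  have hedge : ∀ (a b p q : V), p ≠ a → p ≠ b → G.Adj p q →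
      (G.deleteEdges {s(a,b)}).Adj p q := by
    intro a b p q hpa hpb h
    rw [SimpleGraph.deleteEdges_adj]
    refine ⟨h, ?_⟩
    simp only [Set.mem_singleton_iff]
    intro he
    have hp : p ∈ s(a,b) := by rw [← he]; exact Sym2.mem_mk_left p q
    rcases Sym2.mem_iff.mp hp with h' | h'
    · exact hpa h'
    · exact hpb h'
  have hpartial : ∀ (a b : V) (T : Set V), (∀ y ∈ T, y ≠ a ∧ y ≠ b) →
      ∀ c0 : V → Fin m, (∀ p q : V, p ≠ q →
        ((G.deleteEdges {s(a,b)}).Adj p q ∨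
          ∃ x, (G.deleteEdges {s(a,b)}).Adj p x ∧ (G.deleteEdges {s(a,b)}).Adj x q) →
        c0 p ≠ c0 q) → IsPartial2Coloring G T c0 := by
    intro a b T hT c0 hc0 p hp q hq hpq hrel
    obtain ⟨hpa, hpb⟩ := hT p hp
    obtain ⟨hqa, hqb⟩ := hT q hq
    apply hc0 p q hpq
    rcases hrel with h | ⟨x, h1, h2⟩
    · exact Or.inl (hedge a b p q hpa hpb h)
    · exact Or.inr ⟨x, hedge a b p x hpa hpb h1, (hedge a b q x hqa hqb h2.symm).symm⟩
  have hwv : w ≠ v := by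
    intro h; rw [h] at hdw; omega
  have hdeg_card : ∀ y : V, (G.neighborFinset y).card = G.degree y := fun y => rfl
  by_cases hut : u = t
  · -- case u = t : u is the degree-2 neighbour of v
    subst hut
    have hdu2 : G.degree u = 2 := hdt
    have hwu : w ≠ u := huw.ne'
    -- N(u) = {v, w}
    have hvu : v ∈ G.neighborFinset u := (SimpleGraph.mem_neighborFinset G u v).mpr huv.symm
    have hwu' : w ∈ G.neighborFinset u := (SimpleGraph.mem_neighborFinset G u w).mpr huw
    have hNu : ∀ y, G.Adj u y → y = v ∨ y = w := by
      intro y hy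
      by_contra hcon
      push_neg at hcon
      have hy' : y ∈ (G.neighborFinset u).erase w :=
        Finset.mem_erase.mpr ⟨hcon.2, (SimpleGraph.mem_neighborFinset G u y).mpr hy⟩
      have hv' : v ∈ (G.neighborFinset u).erase w := Finset.mem_erase.mpr ⟨hwv.symm, hvu⟩
      have hcard : ((G.neighborFinset u).erase w).card = 1 := by
        rw [Finset.card_erase_of_mem hwu', hdeg_card, hdu2]
      obtain ⟨z, hz⟩ := Finset.card_eq_one.mp hcard
      rw [hz] at hy' hv'
      exact hcon.1 ((Finset.mem_singleton.mp hy').trans (Finset.mem_singleton.mp hv').symm)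
    -- N(w) = {u, x}
    have huw' : u ∈ G.neighborFinset w := (SimpleGraph.mem_neighborFinset G w u).mpr huw.symm
    have hcardw : ((G.neighborFinset w).erase u).card = 1 := by
      rw [Finset.card_erase_of_mem huw', hdeg_card, hdw]
    obtain ⟨x, hx⟩ := Finset.card_eq_one.mp hcardw
    have hNw : ∀ y, G.Adj w y → y = u ∨ y = x := by
      intro y hy
      by_cases hyu : y = u
      · exact Or.inl hyu
      · refine Or.inr ?_
        have : y ∈ (G.neighborFinset w).erase u :=
          Finset.mem_erase.mpr ⟨hyu, (SimpleGraph.mem_neighborFinset G w y).mpr hy⟩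
        rw [hx] at this
        exact Finset.mem_singleton.mp this
    -- start from a coloring of G minus the edge uw
    obtain ⟨c0, hc0⟩ := hG.2.2 u w huw
    set T0 : Set V := {y : V | y ≠ u ∧ y ≠ w} with hT0
    have hpart0 : IsPartial2Coloring G T0 c0 :=
      hpartial u w T0 (fun y hy => hy) c0 hc0
    -- extend at u
    have hstep1 := extend_coloring_s18 G T0 c0 hpart0 u
      (by simp [hT0]) (insert v (insert x ((G.neighborFinset v).erase u)))
      ?_ ?_
    rotate_left
    · intro y hy hrel
      obtain ⟨hyu, hyw⟩ := hy
      rcases hrel with h | ⟨z, h1, h2⟩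
      · rcases hNu y h with h' | h'
        · simp [h']
        · exact absurd h' hyw
      · rcases hNu z h1 with h' | h'
        · rw [h'] at h2
          refine Finset.mem_insert_of_mem (Finset.mem_insert_of_mem ?_)
          exact Finset.mem_erase.mpr ⟨hyu, (SimpleGraph.mem_neighborFinset G v y).mpr h2⟩
        · rw [h'] at h2
          rcases hNw y h2 with h'' | h''
          · exact absurd h'' hyu
          · simp [h'']
    · have h1 : ((G.neighborFinset v).erase u).card ≤ 3 := by
        have := Finset.card_erase_le (s := G.neighborFinset v) (a := u)
        rw [hdeg_card, hdv] at this
        omega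
      calc (insert v (insert x ((G.neighborFinset v).erase u))).card
          ≤ ((G.neighborFinset v).erase u).card + 2 := by
            have := Finset.card_insert_le x ((G.neighborFinset v).erase u)
            have := Finset.card_insert_le v (insert x ((G.neighborFinset v).erase u))
            omega
        _ < m := by omega
    obtain ⟨c1, hc1, _⟩ := hstep1
    -- extend at w
    have hstep2 := extend_coloring_s18 G (insert u T0) c1 hc1 w
      (by simp [hT0, hwu]) (insert u (insert x (((G.neighborFinset u).erase w) ∪ ((G.neighborFinset x).erase w))))
      ?_ ?_
    rotate_left
    · intro y hy hrel
      have hyw : y ≠ w := by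
        rcases Set.mem_insert_iff.mp hy with h' | h'
        · rw [h']; exact hwu.symm
        · exact h'.2
      rcases hrel with h | ⟨z, h1, h2⟩
      · rcases hNw y h with h' | h' <;> simp [h']
      · rcases hNw z h1 with h' | h'
        · rw [h'] at h2
          refine Finset.mem_insert_of_mem (Finset.mem_insert_of_mem (Finset.mem_union_left _ ?_))
          exact Finset.mem_erase.mpr ⟨hyw, (SimpleGraph.mem_neighborFinset G u y).mpr h2⟩
        · rw [h'] at h2
          refine Finset.mem_insert_of_mem (Finset.mem_insert_of_mem (Finset.mem_union_right _ ?_))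
          exact Finset.mem_erase.mpr ⟨hyw, (SimpleGraph.mem_neighborFinset G x y).mpr h2⟩
    · have h1 : ((G.neighborFinset u).erase w).card ≤ 2 := by
        have := Finset.card_erase_le (s := G.neighborFinset u) (a := w)
        rw [hdeg_card, hdu2] at this
        omega
      have h2 : ((G.neighborFinset x).erase w).card ≤ G.maxDegree := by
        have := Finset.card_erase_le (s := G.neighborFinset x) (a := w)
        rw [hdeg_card] at this
        exact le_trans this (hΔy x)
      have h3 := Finset.card_union_le ((G.neighborFinset u).erase w) ((G.neighborFinset x).erase w)
      have h4 := Finset.card_insert_le x (((G.neighborFinset u).erase w) ∪ ((G.neighborFinset x).erase w))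
      have h5 := Finset.card_insert_le u (insert x (((G.neighborFinset u).erase w) ∪ ((G.neighborFinset x).erase w)))
      omega
    obtain ⟨c2, hc2, _⟩ := hstep2
    refine hG.1 ⟨c2, ?_⟩
    intro p q hpq hrel
    have hmem : ∀ y : V, y ∈ insert w (insert u T0) := by
      intro y
      by_cases h1 : y = w
      · exact Set.mem_insert_iff.mpr (Or.inl h1)
      · by_cases h2 : y = u
        · exact Set.mem_insert_iff.mpr (Or.inr (Set.mem_insert_iff.mpr (Or.inl h2)))
        · exact Set.mem_insert_iff.mpr (Or.inr (Set.mem_insert_iff.mpr (Or.inr ⟨h2, h1⟩)))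
    exact hc2 p (hmem p) q (hmem q) hpq hrel
  · -- main case : u ≠ t
    have hvu' : u ∈ G.neighborFinset v := (SimpleGraph.mem_neighborFinset G v u).mpr huv
    have htv : t ≠ v := hvt.ne'
    have huvne : u ≠ v := huv.ne'
    have hwu : w ≠ u := huw.ne'
    -- the third neighbour s of v
    have hcard_s : (((G.neighborFinset v).erase t).erase u).card = 1 := by
      rw [Finset.card_erase_of_mem (Finset.mem_erase.mpr ⟨hut, hvu'⟩),
        Finset.card_erase_of_mem htmem.1, hdeg_card, hdv]
    obtain ⟨s, hs⟩ := Finset.card_eq_one.mp hcard_s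
    have hs_mem : s ∈ ((G.neighborFinset v).erase t).erase u := by
      rw [hs]; exact Finset.mem_singleton_self s
    have hsu : s ≠ u := (Finset.mem_erase.mp hs_mem).1
    have hst : s ≠ t := (Finset.mem_erase.mp (Finset.mem_erase.mp hs_mem).2).1
    have hsv : s ∈ G.neighborFinset v := (Finset.mem_erase.mp (Finset.mem_erase.mp hs_mem).2).2
    have hNv_eq : G.neighborFinset v = insert t (insert u {s}) := by
      have h1 : insert u (((G.neighborFinset v).erase t).erase u) = (G.neighborFinset v).erase t :=
        Finset.insert_erase (Finset.mem_erase.mpr ⟨hut, hvu'⟩)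
      have h2 : insert t ((G.neighborFinset v).erase t) = G.neighborFinset v :=
        Finset.insert_erase htmem.1
      rw [← h2, ← h1, hs]
    have hsum : ∑ y ∈ G.neighborFinset v, ((G.neighborFinset y).erase v).card
        ≤ G.maxDegree + 4 := by
      have herase : ∀ y ∈ G.neighborFinset v, ((G.neighborFinset y).erase v).card = G.degree y - 1 := by
        intro y hy
        rw [Finset.card_erase_of_mem
          ((SimpleGraph.mem_neighborFinset G y v).mpr ((SimpleGraph.mem_neighborFinset G v y).mp hy).symm),
          hdeg_card]
      rw [Finset.sum_congr rfl herase, hNv_eq]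
      have htni : t ∉ insert u ({s} : Finset V) := by
        simp only [Finset.mem_insert, Finset.mem_singleton]
        push_neg
        exact ⟨fun h => hut h.symm, fun h => hst h.symm⟩
      have huni : u ∉ ({s} : Finset V) := by
        simp only [Finset.mem_singleton]
        exact fun h => hsu h.symm
      rw [Finset.sum_insert htni, Finset.sum_insert huni, Finset.sum_singleton]
      have h1 := hΔy s
      omega
    -- the second neighbour t' of t
    have hvt' : v ∈ G.neighborFinset t := (SimpleGraph.mem_neighborFinset G t v).mpr hvt.symm
    have hcardt : ((G.neighborFinset t).erase v).card = 1 := by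
      rw [Finset.card_erase_of_mem hvt', hdeg_card, hdt]
    obtain ⟨t', ht'⟩ := Finset.card_eq_one.mp hcardt
    have hNt : ∀ y, G.Adj t y → y = v ∨ y = t' := by
      intro y hy
      by_cases hyv : y = v
      · exact Or.inl hyv
      · refine Or.inr ?_
        have : y ∈ (G.neighborFinset t).erase v :=
          Finset.mem_erase.mpr ⟨hyv, (SimpleGraph.mem_neighborFinset G t y).mpr hy⟩
        rw [ht'] at this
        exact Finset.mem_singleton.mp this
    -- start from a coloring of G minus the edge vt
    obtain ⟨c0, hc0⟩ := hG.2.2 v t hvt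
    set T0 : Set V := {y : V | y ≠ v ∧ y ≠ t ∧ y ≠ w} with hT0
    have hpart0 : IsPartial2Coloring G T0 c0 :=
      hpartial v t T0 (fun y hy => ⟨hy.1, hy.2.1⟩) c0 hc0
    -- extend at v
    have hstep1 := extend_coloring_s18 G T0 c0 hpart0 v
      (by simp [hT0])
      ((((G.neighborFinset v).erase t) ∪
        (G.neighborFinset v).biUnion (fun y => (G.neighborFinset y).erase v)).erase w)
      ?_ ?_
    rotate_left
    · intro y hy hrel
      obtain ⟨hyv, hyt, hyw⟩ := hy
      refine Finset.mem_erase.mpr ⟨hyw, ?_⟩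
      rcases hrel with h | ⟨z, h1, h2⟩
      · exact Finset.mem_union_left _
          (Finset.mem_erase.mpr ⟨hyt, (SimpleGraph.mem_neighborFinset G v y).mpr h⟩)
      · refine Finset.mem_union_right _ (Finset.mem_biUnion.mpr ?_)
        exact ⟨z, (SimpleGraph.mem_neighborFinset G v z).mpr h1,
          Finset.mem_erase.mpr ⟨hyv, (SimpleGraph.mem_neighborFinset G z y).mpr h2⟩⟩
    · have hwmem : w ∈ ((G.neighborFinset v).erase t) ∪
          (G.neighborFinset v).biUnion (fun y => (G.neighborFinset y).erase v) := by
        refine Finset.mem_union_right _ (Finset.mem_biUnion.mpr ?_)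
        exact ⟨u, hvu', Finset.mem_erase.mpr ⟨hwv, (SimpleGraph.mem_neighborFinset G u w).mpr huw⟩⟩
      rw [Finset.card_erase_of_mem hwmem]
      have h1 : ((G.neighborFinset v).erase t).card = 2 := by
        rw [Finset.card_erase_of_mem htmem.1, hdeg_card, hdv]
      have h2 := Finset.card_biUnion_le (s := G.neighborFinset v)
        (t := fun y => (G.neighborFinset y).erase v)
      have h3 := Finset.card_union_le ((G.neighborFinset v).erase t)
        ((G.neighborFinset v).biUnion (fun y => (G.neighborFinset y).erase v))
      omega
    obtain ⟨c1, hc1, _⟩ := hstep1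
    -- extend at t
    have hstep2 := extend_coloring_s18 G (insert v T0) c1 hc1 t
      (by simp [hT0, htv])
      (insert v (insert t' (((G.neighborFinset v).erase t) ∪ ((G.neighborFinset t').erase t))))
      ?_ ?_
    rotate_left
    · intro y hy hrel
      have hyt : y ≠ t := by
        rcases Set.mem_insert_iff.mp hy with h' | h'
        · rw [h']; exact fun h => htv h.symm
        · exact h'.2.1
      rcases hrel with h | ⟨z, h1, h2⟩
      · rcases hNt y h with h' | h' <;> simp [h']
      · rcases hNt z h1 with h' | h'
        · rw [h'] at h2
          refine Finset.mem_insert_of_mem (Finset.mem_insert_of_mem (Finset.mem_union_left _ ?_))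
          exact Finset.mem_erase.mpr ⟨hyt, (SimpleGraph.mem_neighborFinset G v y).mpr h2⟩
        · rw [h'] at h2
          refine Finset.mem_insert_of_mem (Finset.mem_insert_of_mem (Finset.mem_union_right _ ?_))
          exact Finset.mem_erase.mpr ⟨hyt, (SimpleGraph.mem_neighborFinset G t' y).mpr h2⟩
    · have h1 : ((G.neighborFinset v).erase t).card = 2 := by
        rw [Finset.card_erase_of_mem htmem.1, hdeg_card, hdv]
      have h2 : ((G.neighborFinset t').erase t).card ≤ G.maxDegree := by
        have := Finset.card_erase_le (s := G.neighborFinset t') (a := t)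
        rw [hdeg_card] at this
        exact le_trans this (hΔy t')
      have h3 := Finset.card_union_le ((G.neighborFinset v).erase t) ((G.neighborFinset t').erase t)
      have h4 := Finset.card_insert_le t' (((G.neighborFinset v).erase t) ∪ ((G.neighborFinset t').erase t))
      have h5 := Finset.card_insert_le v (insert t' (((G.neighborFinset v).erase t) ∪ ((G.neighborFinset t').erase t)))
      omega
    obtain ⟨c2, hc2, _⟩ := hstep2
    by_cases hwt : w = t
    · -- w = t : everything is already colored
      refine hG.1 ⟨c2, ?_⟩
      intro p q hpq hrel
      have hmem : ∀ y : V, y ∈ insert t (insert v T0) := by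
        intro y
        by_cases h1 : y = t
        · exact Set.mem_insert_iff.mpr (Or.inl h1)
        · by_cases h2 : y = v
          · exact Set.mem_insert_iff.mpr (Or.inr (Set.mem_insert_iff.mpr (Or.inl h2)))
          · refine Set.mem_insert_iff.mpr (Or.inr (Set.mem_insert_iff.mpr (Or.inr ?_)))
            exact ⟨h2, h1, fun h => h1 (h.trans hwt)⟩
      exact hc2 p (hmem p) q (hmem q) hpq hrel
    · -- w ∉ {v, t} : extend at w
      -- the second neighbour x of w
      have huw' : u ∈ G.neighborFinset w := (SimpleGraph.mem_neighborFinset G w u).mpr huw.symm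
      have hcardw : ((G.neighborFinset w).erase u).card = 1 := by
        rw [Finset.card_erase_of_mem huw', hdeg_card, hdw]
      obtain ⟨x, hx⟩ := Finset.card_eq_one.mp hcardw
      have hNw : ∀ y, G.Adj w y → y = u ∨ y = x := by
        intro y hy
        by_cases hyu : y = u
        · exact Or.inl hyu
        · refine Or.inr ?_
          have : y ∈ (G.neighborFinset w).erase u :=
            Finset.mem_erase.mpr ⟨hyu, (SimpleGraph.mem_neighborFinset G w y).mpr hy⟩
          rw [hx] at this
          exact Finset.mem_singleton.mp this
      have hstep3 := extend_coloring_s18 G (insert t (insert v T0)) c2 hc2 w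
        (by simp [hT0, hwt, hwv])
        (insert u (insert x (((G.neighborFinset u).erase w) ∪ ((G.neighborFinset x).erase w))))
        ?_ ?_
      rotate_left
      · intro y hy hrel
        have hyw : y ≠ w := by
          rcases Set.mem_insert_iff.mp hy with h' | h'
          · rw [h']; exact fun h => hwt h.symm
          · rcases Set.mem_insert_iff.mp h' with h'' | h''
            · rw [h'']; exact fun h => hwv h.symm
            · exact h''.2.2
        rcases hrel with h | ⟨z, h1, h2⟩
        · rcases hNw y h with h' | h' <;> simp [h']
        · rcases hNw z h1 with h' | h'
          · rw [h'] at h2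
            refine Finset.mem_insert_of_mem (Finset.mem_insert_of_mem (Finset.mem_union_left _ ?_))
            exact Finset.mem_erase.mpr ⟨hyw, (SimpleGraph.mem_neighborFinset G u y).mpr h2⟩
          · rw [h'] at h2
            refine Finset.mem_insert_of_mem (Finset.mem_insert_of_mem (Finset.mem_union_right _ ?_))
            exact Finset.mem_erase.mpr ⟨hyw, (SimpleGraph.mem_neighborFinset G x y).mpr h2⟩
      · have hwu2 : w ∈ G.neighborFinset u := (SimpleGraph.mem_neighborFinset G u w).mpr huw
        have hwx : w ∈ G.neighborFinset x := by
          have : x ∈ (G.neighborFinset w).erase u := by rw [hx]; exact Finset.mem_singleton_self x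
          have hadj : G.Adj w x := (SimpleGraph.mem_neighborFinset G w x).mp (Finset.mem_erase.mp this).2
          exact (SimpleGraph.mem_neighborFinset G x w).mpr hadj.symm
        have h1 : ((G.neighborFinset u).erase w).card = G.degree u - 1 := by
          rw [Finset.card_erase_of_mem hwu2, hdeg_card]
        have h2 : ((G.neighborFinset x).erase w).card = G.degree x - 1 := by
          rw [Finset.card_erase_of_mem hwx, hdeg_card]
        have h3 := Finset.card_union_le ((G.neighborFinset u).erase w) ((G.neighborFinset x).erase w)
        have h4 := Finset.card_insert_le x (((G.neighborFinset u).erase w) ∪ ((G.neighborFinset x).erase w))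
        have h5 := Finset.card_insert_le u (insert x (((G.neighborFinset u).erase w) ∪ ((G.neighborFinset x).erase w)))
        have h6 := hΔy x
        have h7 : 1 ≤ G.degree u := by
          rw [← hdeg_card]
          exact Finset.card_pos.mpr ⟨w, hwu2⟩
        have h8 : 1 ≤ G.degree x := by
          rw [← hdeg_card]
          exact Finset.card_pos.mpr ⟨w, hwx⟩
        omega
      obtain ⟨c3, hc3, _⟩ := hstep3
      refine hG.1 ⟨c3, ?_⟩
      intro p q hpq hrel
      have hmem : ∀ y : V, y ∈ insert w (insert t (insert v T0)) := by
        intro y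
        by_cases h1 : y = w
        · exact Set.mem_insert_iff.mpr (Or.inl h1)
        · by_cases h2 : y = t
          · exact Set.mem_insert_iff.mpr (Or.inr (Set.mem_insert_iff.mpr (Or.inl h2)))
          · by_cases h3 : y = v
            · exact Set.mem_insert_iff.mpr (Or.inr (Set.mem_insert_iff.mpr
                (Or.inr (Set.mem_insert_iff.mpr (Or.inl h3)))))
            · exact Set.mem_insert_iff.mpr (Or.inr (Set.mem_insert_iff.mpr
                (Or.inr (Set.mem_insert_iff.mpr (Or.inr ⟨h3, h2, h1⟩)))))
      exact hc3 p (hmem p) q (hmem q) hpq hrel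
end

section
/- Let G be a (Δ+6)-critical finite simple graph with maximum degree Δ ≥ 10 and girth at least 5. Then no 4(2)-vertex of G is adjacent to a vertex of degree at most 5 that has two neighbours of degree 2, and no 4(2)-vertex of G is adjacent to a vertex of degree at most 4 that has a neighbour of degree 2. -/
open Finset

variable {V : Type*}

variable [Fintype V] [DecidableEq V]

section AuxStmt19
open SimpleGraph
set_option linter.unusedSectionVars false
set_option linter.unusedVariables false

lemma exists_avoid_s19 {m : ℕ} (c : V → Fin m) (A : Finset V) (hA : A.card < m) :
    ∃ a : Fin m, ∀ x ∈ A, c x ≠ a := by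
  have h1 : (A.image c).card < m := lt_of_le_of_lt (Finset.card_image_le) hA
  have h2 : (A.image c) ≠ Finset.univ := by
    intro h
    rw [h, Finset.card_univ, Fintype.card_fin] at h1
    omega
  have h3 : ((A.image c)ᶜ : Finset (Fin m)).Nonempty := by
    rw [← Finset.card_pos, Finset.card_compl, Fintype.card_fin]
    omega
  obtain ⟨a, ha⟩ := h3
  rw [Finset.mem_compl] at ha
  exact ⟨a, fun x hx hxa => ha (hxa ▸ Finset.mem_image_of_mem c hx)⟩

lemma greedyAux {m : ℕ} (R : V → V → Prop) [DecidableRel R] (hsym : Symmetric R) :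
    ∀ (rest : List V) (c : V → Fin m),
    (∀ s ∈ rest, (univ.filter fun x => x ≠ s ∧ R s x).card < m) →
    (∀ x y, x ≠ y → R x y → x ∉ rest → y ∉ rest → c x ≠ c y) →
    ∃ c' : V → Fin m, (∀ x, x ∉ rest → c' x = c x) ∧
      ∀ x y, x ≠ y → R x y → c' x ≠ c' y := by
  intro rest
  induction rest with
  | nil =>
    intro c _ hb
    exact ⟨c, fun x _ => rfl, fun x y hxy hR => hb x y hxy hR (by simp) (by simp)⟩
  | cons s rest ih =>
    intro c hcard hb
    obtain ⟨a, ha⟩ := exists_avoid_s19 c (univ.filter fun x => x ≠ s ∧ R s x)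
      (hcard s (by simp))
    set c₁ := Function.update c s a with hc₁
    have hupd : ∀ x, x ≠ s → c₁ x = c x := fun x hx => Function.update_of_ne hx a c
    have hb₁ : ∀ x y, x ≠ y → R x y → x ∉ rest → y ∉ rest → c₁ x ≠ c₁ y := by
      intro x y hxy hR hx hy
      by_cases hxs : x = s
      · subst hxs
        rw [hupd y (Ne.symm hxy), hc₁, Function.update_self]
        exact fun h => ha y (by simp [Ne.symm hxy, hR]) h.symm
      · by_cases hys : y = s
        · subst hys
          rw [hupd x hxs, hc₁, Function.update_self]
          exact ha x (by simp [hxs, hsym hR])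
        · rw [hupd x hxs, hupd y hys]
          exact hb x y hxy hR (by simp [hx, hxs]) (by simp [hy, hys])
    obtain ⟨c', hc'1, hc'2⟩ := ih c₁ (fun t ht => hcard t (by simp [ht])) hb₁
    refine ⟨c', fun x hx => ?_, hc'2⟩
    have hx' : x ∉ rest := fun h => hx (by simp [h])
    rw [hc'1 x hx', hupd x (fun h => hx (by simp [h]))]

lemma greedy {m : ℕ} (R : V → V → Prop) [DecidableRel R] (hsym : Symmetric R)
    (v : V) (rest : List V) (c : V → Fin m)
    (hhead : ((univ.filter fun x => x ≠ v ∧ R v x).filter (fun x => x ∉ rest)).card < m)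
    (hrest : ∀ s ∈ rest, (univ.filter fun x => x ≠ s ∧ R s x).card < m)
    (hbase : ∀ x y, x ≠ y → R x y → x ∉ (v :: rest) → y ∉ (v :: rest) → c x ≠ c y) :
    ∃ c' : V → Fin m, ∀ x y, x ≠ y → R x y → c' x ≠ c' y := by
  obtain ⟨a, ha⟩ := exists_avoid_s19 c _ hhead
  set c₁ := Function.update c v a with hc₁
  have hupd : ∀ x, x ≠ v → c₁ x = c x := fun x hx => Function.update_of_ne hx a c
  have hb₁ : ∀ x y, x ≠ y → R x y → x ∉ rest → y ∉ rest → c₁ x ≠ c₁ y := by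
    intro x y hxy hR hx hy
    by_cases hxs : x = v
    · subst hxs
      rw [hupd y (Ne.symm hxy), hc₁, Function.update_self]
      exact fun h => ha y (by simp [Ne.symm hxy, hR, hy]) h.symm
    · by_cases hys : y = v
      · subst hys
        rw [hupd x hxs, hc₁, Function.update_self]
        exact ha x (by simp [hxs, hsym hR, hx])
      · rw [hupd x hxs, hupd y hys]
        exact hbase x y hxy hR (by simp [hx, hxs]) (by simp [hy, hys])
  obtain ⟨c', _, hc'⟩ := greedyAux R hsym rest c₁ hrest hb₁
  exact ⟨c', hc'⟩

lemma adj_del {G : SimpleGraph V} {a b p q : V} (h : G.Adj p q) (hp : p ≠ a) (hp' : p ≠ b) :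
    (G.deleteEdges {s(a,b)}).Adj p q := by
  rw [SimpleGraph.deleteEdges_adj]
  refine ⟨h, ?_⟩
  simp only [Set.mem_singleton_iff, Sym2.eq_iff]
  rintro (⟨rfl, rfl⟩ | ⟨rfl, rfl⟩)
  · exact hp rfl
  · exact hp' rfl

lemma base_delete {G : SimpleGraph V} {m : ℕ} {a b : V} {c : V → Fin m}
    (hc : ∀ x y : V, x ≠ y →
      ((G.deleteEdges {s(a,b)}).Adj x y ∨
        ∃ t, (G.deleteEdges {s(a,b)}).Adj x t ∧ (G.deleteEdges {s(a,b)}).Adj t y) → c x ≠ c y)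
    {x y : V} (hxy : x ≠ y) (hR : G.Adj x y ∨ ∃ t, G.Adj x t ∧ G.Adj t y)
    (hxa : x ≠ a) (hxb : x ≠ b) (hya : y ≠ a) (hyb : y ≠ b) : c x ≠ c y := by
  apply hc x y hxy
  rcases hR with h | ⟨t, h1, h2⟩
  · exact Or.inl (adj_del h hxa hxb)
  · exact Or.inr ⟨t, adj_del h1 hxa hxb, (adj_del h2.symm hya hyb).symm⟩

lemma conf_card (G : SimpleGraph V) [DecidableRel G.Adj] {s : V} (A : Finset V)
    (hA : ∀ x ∈ A, x ≠ s ∧ (G.Adj s x ∨ ∃ t, G.Adj s t ∧ G.Adj t x)) :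
    A.card ≤ ∑ t ∈ G.neighborFinset s, G.degree t := by
  have hsub : A ⊆ (G.neighborFinset s).biUnion
      (fun t => insert t (G.neighborFinset t \ {s})) := by
    intro x hx
    obtain ⟨hxs, hconf⟩ := hA x hx
    rw [Finset.mem_biUnion]
    rcases hconf with h | ⟨t, h1, h2⟩
    · exact ⟨x, by rwa [mem_neighborFinset], Finset.mem_insert_self _ _⟩
    · refine ⟨t, by rwa [mem_neighborFinset], Finset.mem_insert_of_mem ?_⟩
      rw [Finset.mem_sdiff, mem_neighborFinset, Finset.mem_singleton]
      exact ⟨h2, hxs⟩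
  calc A.card ≤ _ := Finset.card_le_card hsub
    _ ≤ ∑ t ∈ G.neighborFinset s, (insert t (G.neighborFinset t \ {s})).card :=
        Finset.card_biUnion_le
    _ ≤ ∑ t ∈ G.neighborFinset s, G.degree t := by
        apply Finset.sum_le_sum
        intro t ht
        have hvs : {s} ⊆ G.neighborFinset t := by
          simp only [Finset.singleton_subset_iff, mem_neighborFinset]
          exact ((mem_neighborFinset G s t).mp ht).symm
        have h1 : (G.neighborFinset t \ {s}).card = G.degree t - 1 := by
          rw [Finset.card_sdiff_of_subset hvs, Finset.card_singleton, ← G.card_neighborFinset_eq_degree]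
        have h2 : 1 ≤ G.degree t := by
          rw [← G.card_neighborFinset_eq_degree]
          exact Finset.card_pos.mpr ⟨s, hvs (Finset.mem_singleton_self s)⟩
        calc (insert t (G.neighborFinset t \ {s})).card
            ≤ (G.neighborFinset t \ {s}).card + 1 := Finset.card_insert_le _ _
          _ ≤ G.degree t := by omega

lemma deg2_conf_card (G : SimpleGraph V) [DecidableRel G.Adj] {s t : V}
    (hs : G.degree s = 2) (hst : G.Adj s t) (A : Finset V)
    (hA : ∀ x ∈ A, x ≠ s ∧ (G.Adj s x ∨ ∃ w, G.Adj s w ∧ G.Adj w x)) :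
    A.card ≤ G.degree t + G.maxDegree := by
  have h1 := conf_card G A hA
  have h2 : (G.neighborFinset s).card = 2 := by rwa [G.card_neighborFinset_eq_degree]
  obtain ⟨a, b, hab, hN⟩ := Finset.card_eq_two.mp h2
  have ht : t ∈ G.neighborFinset s := (mem_neighborFinset G s t).mpr hst
  rw [hN] at h1 ht
  rw [Finset.sum_pair hab] at h1
  rcases Finset.mem_insert.mp ht with rfl | ht
  · exact h1.trans (by have := G.degree_le_maxDegree b; omega)
  · rw [Finset.mem_singleton] at ht
    subst ht
    exact h1.trans (by have := G.degree_le_maxDegree a; omega)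

lemma head_card (G : SimpleGraph V) [DecidableRel G.Adj] {v u v1 v2 : V} {E : List V}
    (hdv : G.degree v = 4) (huv : G.Adj v u) (hv1 : G.Adj v v1) (hv2 : G.Adj v v2)
    (hd1 : G.degree v1 = 2) (hd2 : G.degree v2 = 2) (h12 : v1 ≠ v2)
    (huv1 : u ≠ v1) (huv2 : u ≠ v2)
    (hv1E : v1 ∈ E) (hv2E : v2 ∈ E)
    (W : Finset V) (hW : W ⊆ G.neighborFinset u) (hWv : v ∉ W) (hWE : ∀ w ∈ W, w ∈ E)
    (hWcard : G.degree u ≤ 3 + W.card)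
    (A : Finset V) (hA : ∀ x ∈ A, x ∉ E ∧ x ≠ v ∧ (G.Adj v x ∨ ∃ t, G.Adj v t ∧ G.Adj t x)) :
    A.card ≤ G.maxDegree + 5 := by
  set f : V → Finset V := fun t => (insert t (G.neighborFinset t \ {v})).filter (· ∉ E) with hf
  have hsub : A ⊆ (G.neighborFinset v).biUnion f := by
    intro x hx
    obtain ⟨hxE, hxv, hconf⟩ := hA x hx
    rw [Finset.mem_biUnion]
    rcases hconf with h | ⟨t, h1, h2⟩
    · exact ⟨x, (mem_neighborFinset G v x).mpr h,
        Finset.mem_filter.mpr ⟨Finset.mem_insert_self _ _, hxE⟩⟩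
    · refine ⟨t, (mem_neighborFinset G v t).mpr h1, Finset.mem_filter.mpr
        ⟨Finset.mem_insert_of_mem ?_, hxE⟩⟩
      rw [Finset.mem_sdiff, mem_neighborFinset, Finset.mem_singleton]
      exact ⟨h2, hxv⟩
  -- generic bound
  have hgen : ∀ t ∈ G.neighborFinset v, (f t).card ≤ G.degree t := by
    intro t ht
    have hvs : {v} ⊆ G.neighborFinset t := by
      simp only [Finset.singleton_subset_iff, mem_neighborFinset]
      exact ((mem_neighborFinset G v t).mp ht).symm
    have h1 : (G.neighborFinset t \ {v}).card = G.degree t - 1 := by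
      rw [Finset.card_sdiff_of_subset hvs, Finset.card_singleton, ← G.card_neighborFinset_eq_degree]
    have h2 : 1 ≤ G.degree t := by
      rw [← G.card_neighborFinset_eq_degree]
      exact Finset.card_pos.mpr ⟨v, hvs (Finset.mem_singleton_self v)⟩
    calc (f t).card ≤ (insert t (G.neighborFinset t \ {v})).card :=
          Finset.card_le_card (Finset.filter_subset _ _)
      _ ≤ (G.neighborFinset t \ {v}).card + 1 := Finset.card_insert_le _ _
      _ ≤ G.degree t := by omega
  -- bound for v1 and v2
  have hdeg2 : ∀ s, G.Adj v s → G.degree s = 2 → s ∈ E → (f s).card ≤ 1 := by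
    intro s hvs hds hsE
    have hsub2 : f s ⊆ G.neighborFinset s \ {v} := by
      intro x hx
      obtain ⟨hins, hxE⟩ := Finset.mem_filter.mp hx
      rcases Finset.mem_insert.mp hins with rfl | h
      · exact absurd hsE hxE
      · exact h
    have hvmem : {v} ⊆ G.neighborFinset s := by
      simp only [Finset.singleton_subset_iff, mem_neighborFinset]
      exact hvs.symm
    have : (G.neighborFinset s \ {v}).card = 1 := by
      rw [Finset.card_sdiff_of_subset hvmem, Finset.card_singleton, G.card_neighborFinset_eq_degree, hds]
    exact (Finset.card_le_card hsub2).trans (le_of_eq this)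
  -- bound for u
  have hub : (f u).card ≤ 3 := by
    have hWsub : W ⊆ G.neighborFinset u \ {v} := by
      intro w hw
      rw [Finset.mem_sdiff, Finset.mem_singleton]
      exact ⟨hW hw, fun h => hWv (h ▸ hw)⟩
    have hsub2 : f u ⊆ insert u ((G.neighborFinset u \ {v}) \ W) := by
      intro x hx
      obtain ⟨hins, hxE⟩ := Finset.mem_filter.mp hx
      rcases Finset.mem_insert.mp hins with rfl | h
      · exact Finset.mem_insert_self _ _
      · refine Finset.mem_insert_of_mem (Finset.mem_sdiff.mpr ⟨h, fun hw => hxE (hWE x hw)⟩)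
    have hvmem : {v} ⊆ G.neighborFinset u := by
      simp only [Finset.singleton_subset_iff, mem_neighborFinset]
      exact huv.symm
    have h1 : (G.neighborFinset u \ {v}).card = G.degree u - 1 := by
      rw [Finset.card_sdiff_of_subset hvmem, Finset.card_singleton, ← G.card_neighborFinset_eq_degree]
    have h2 : ((G.neighborFinset u \ {v}) \ W).card = (G.degree u - 1) - W.card := by
      rw [Finset.card_sdiff_of_subset hWsub, h1]
    have h3 : W.card ≤ G.degree u - 1 := by
      have := Finset.card_le_card hWsub
      omega
    have h4 : 1 ≤ G.degree u := by
      have := Finset.card_le_card hvmem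
      rw [Finset.card_singleton, G.card_neighborFinset_eq_degree] at this
      exact this
    calc (f u).card ≤ ((G.neighborFinset u \ {v}) \ W).card + 1 :=
          (Finset.card_le_card hsub2).trans (Finset.card_insert_le _ _)
      _ ≤ 3 := by omega
  -- assemble
  have hS3 : ({u, v1, v2} : Finset V) ⊆ G.neighborFinset v := by
    intro x hx
    rcases Finset.mem_insert.mp hx with rfl | hx
    · exact (mem_neighborFinset G v x).mpr huv
    · rcases Finset.mem_insert.mp hx with rfl | hx
      · exact (mem_neighborFinset G v x).mpr hv1
      · rw [Finset.mem_singleton] at hx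
        subst hx
        exact (mem_neighborFinset G v x).mpr hv2
  have hS3card : ({u, v1, v2} : Finset V).card = 3 := by
    rw [Finset.card_insert_of_notMem (by simp [huv1, huv2]),
      Finset.card_insert_of_notMem (by simp [h12]), Finset.card_singleton]
  have hNcard : (G.neighborFinset v).card = 4 := by rwa [G.card_neighborFinset_eq_degree]
  have hsplit : ∑ t ∈ G.neighborFinset v \ {u, v1, v2}, (f t).card
      + ∑ t ∈ ({u, v1, v2} : Finset V), (f t).card
      = ∑ t ∈ G.neighborFinset v, (f t).card := Finset.sum_sdiff hS3
  have hrestsum : ∑ t ∈ G.neighborFinset v \ {u, v1, v2}, (f t).card ≤ G.maxDegree := by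
    have hcard : (G.neighborFinset v \ {u, v1, v2}).card = 1 := by
      rw [Finset.card_sdiff_of_subset hS3, hNcard, hS3card]
    have hb : ∀ t ∈ G.neighborFinset v \ {u, v1, v2}, (f t).card ≤ G.maxDegree := by
      intro t ht
      have ht' := Finset.mem_sdiff.mp ht
      exact (hgen t ht'.1).trans (G.degree_le_maxDegree t)
    calc ∑ t ∈ G.neighborFinset v \ {u, v1, v2}, (f t).card
        ≤ (G.neighborFinset v \ {u, v1, v2}).card • G.maxDegree :=
          Finset.sum_le_card_nsmul _ _ _ hb
      _ = G.maxDegree := by rw [hcard, one_smul]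
  have hS3sum : ∑ t ∈ ({u, v1, v2} : Finset V), (f t).card ≤ 5 := by
    rw [Finset.sum_insert (by simp [huv1, huv2]), Finset.sum_pair h12]
    have h1 := hdeg2 v1 hv1 hd1 hv1E
    have h2 := hdeg2 v2 hv2 hd2 hv2E
    omega
  have := Finset.card_le_card hsub
  have := Finset.card_biUnion_le (s := G.neighborFinset v) (t := f)
  omega

lemma conf_symm (G : SimpleGraph V) :
    Symmetric (fun p q : V => G.Adj p q ∨ ∃ t, G.Adj p t ∧ G.Adj t q) := by
  intro p q h
  rcases h with h | ⟨t, h1, h2⟩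
  · exact Or.inl h.symm
  · exact Or.inr ⟨t, h2.symm, h1.symm⟩

lemma key (G : SimpleGraph V) [DecidableRel G.Adj]
    (hG : Critical2 G (G.maxDegree + 6))
    {v u v1 v2 : V} (W : Finset V)
    (hdv : G.degree v = 4)
    (hv1 : G.Adj v v1) (hv2 : G.Adj v v2)
    (hd1 : G.degree v1 = 2) (hd2 : G.degree v2 = 2) (h12 : v1 ≠ v2)
    (hu : G.Adj v u) (hdu5 : G.degree u ≤ 5) (hdu3 : 3 ≤ G.degree u)
    (hW : W ⊆ G.neighborFinset u) (hW2 : ∀ w ∈ W, G.degree w = 2)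
    (hWcard : G.degree u ≤ 3 + W.card) : False := by
  haveI hdec : DecidableRel (fun p q : V => G.Adj p q ∨ ∃ t, G.Adj p t ∧ G.Adj t q) :=
    fun p q => inferInstanceAs (Decidable (G.Adj p q ∨ ∃ t, G.Adj p t ∧ G.Adj t q))
  obtain ⟨c, hc⟩ := hG.2.2 v v1 hv1
  have huv1 : u ≠ v1 := fun h => by rw [h, hd1] at hdu3; omega
  have huv2 : u ≠ v2 := fun h => by rw [h, hd2] at hdu3; omega
  have hvW : v ∉ W := fun h => by rw [hW2 v h] at hdv; omega
  have hvv1 : v ≠ v1 := fun h => by rw [h, hd1] at hdv; omega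
  have hvv2 : v ≠ v2 := fun h => by rw [h, hd2] at hdv; omega
  set rest : List V := v1 :: v2 :: W.toList with hrestdef
  refine Exists.elim (greedy (m := G.maxDegree + 6)
      (fun p q : V => G.Adj p q ∨ ∃ t, G.Adj p t ∧ G.Adj t q) (conf_symm G) v rest c
      ?_ ?_ ?_) (fun c' hc' => hG.1 ⟨c', fun a b h1 h2 => hc' a b h1 h2⟩)
  · -- head bound
    beta_reduce
    have hb := head_card G (E := rest) hdv hu hv1 hv2 hd1 hd2 h12 huv1 huv2
      (by simp [hrestdef]) (by simp [hrestdef]) W hW hvW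
      (fun w hw => by simp [hrestdef, Finset.mem_toList, hw])
      hWcard
      ((univ.filter fun x => x ≠ v ∧ (G.Adj v x ∨ ∃ t, G.Adj v t ∧ G.Adj t x)).filter
        (fun x => x ∉ rest))
      (by
        intro x hx
        obtain ⟨hx1, hx2⟩ := Finset.mem_filter.mp hx
        obtain ⟨_, hx3, hx4⟩ := Finset.mem_filter.mp hx1
        exact ⟨hx2, hx3, hx4⟩)
    omega
  · -- rest bounds
    intro s hs
    beta_reduce
    rw [hrestdef] at hs
    have hΔ4 := G.degree_le_maxDegree v
    have hΔ5 := G.degree_le_maxDegree u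
    rcases List.mem_cons.mp hs with rfl | hs
    · have hb := deg2_conf_card G hd1 hv1.symm
        (univ.filter fun x => x ≠ s ∧ (G.Adj s x ∨ ∃ t, G.Adj s t ∧ G.Adj t x))
        (fun x hx => (Finset.mem_filter.mp hx).2)
      omega
    rcases List.mem_cons.mp hs with rfl | hs
    · have hb := deg2_conf_card G hd2 hv2.symm
        (univ.filter fun x => x ≠ s ∧ (G.Adj s x ∨ ∃ t, G.Adj s t ∧ G.Adj t x))
        (fun x hx => (Finset.mem_filter.mp hx).2)
      omega
    · have hsW : s ∈ W := Finset.mem_toList.mp hs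
      have hsu : G.Adj s u := ((mem_neighborFinset G u s).mp (hW hsW)).symm
      have hb := deg2_conf_card G (hW2 s hsW) hsu
        (univ.filter fun x => x ≠ s ∧ (G.Adj s x ∨ ∃ t, G.Adj s t ∧ G.Adj t x))
        (fun x hx => (Finset.mem_filter.mp hx).2)
      omega
  · -- base coloring
    intro x y hxy hR hx hy
    beta_reduce at hR
    simp only [hrestdef, List.mem_cons, not_or] at hx hy
    exact base_delete hc hxy hR hx.1 hx.2.1 hy.1 hy.2.1

lemma key2 (G : SimpleGraph V) [DecidableRel G.Adj]
    (hG : Critical2 G (G.maxDegree + 6))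
    {v u w : V} (hdv : G.degree v = 4) (hu : G.Adj u v) (hdu : G.degree u = 2)
    (huw : G.Adj u w) (hdw : G.degree w = 2) : False := by
  haveI hdec : DecidableRel (fun p q : V => G.Adj p q ∨ ∃ t, G.Adj p t ∧ G.Adj t q) :=
    fun p q => inferInstanceAs (Decidable (G.Adj p q ∨ ∃ t, G.Adj p t ∧ G.Adj t q))
  obtain ⟨c, hc⟩ := hG.2.2 u w huw
  refine Exists.elim (greedy (m := G.maxDegree + 6)
      (fun p q : V => G.Adj p q ∨ ∃ t, G.Adj p t ∧ G.Adj t q) (conf_symm G) u [w] c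
      ?_ ?_ ?_) (fun c' hc' => hG.1 ⟨c', fun a b h1 h2 => hc' a b h1 h2⟩)
  · beta_reduce
    have hΔ := G.degree_le_maxDegree v
    have hb := deg2_conf_card G hdu hu
      ((univ.filter fun x => x ≠ u ∧ (G.Adj u x ∨ ∃ t, G.Adj u t ∧ G.Adj t x)).filter
        (fun x => x ∉ [w]))
      (by
        intro x hx
        exact (Finset.mem_filter.mp (Finset.mem_filter.mp hx).1).2)
    omega
  · intro s hs
    beta_reduce
    have hΔ := G.degree_le_maxDegree u
    rcases List.mem_cons.mp hs with rfl | hs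
    · have hb := deg2_conf_card G hdw huw.symm
        (univ.filter fun x => x ≠ s ∧ (G.Adj s x ∨ ∃ t, G.Adj s t ∧ G.Adj t x))
        (fun x hx => (Finset.mem_filter.mp hx).2)
      omega
    · simp at hs
  · intro x y hxy hR hx hy
    beta_reduce at hR
    simp only [List.mem_cons, not_or] at hx hy
    exact base_delete hc hxy hR hx.1 hx.2.1 hy.1 hy.2.1

end AuxStmt19

set_option linter.unusedVariables false in
open SimpleGraph in
theorem stmt19 (G : SimpleGraph V) [DecidableRel G.Adj]
    (hG : Critical2 G (G.maxDegree + 6))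
    (hΔ : 10 ≤ G.maxDegree) (hg : 5 ≤ G.girth) :
    (∀ v u : V, IsKD G 4 2 v → G.Adj v u → G.degree u ≤ 5 →
      ¬ 2 ≤ ((G.neighborFinset u).filter (fun w => G.degree w = 2)).card) ∧
    (∀ v u : V, IsKD G 4 2 v → G.Adj v u → G.degree u ≤ 4 →
      ¬ ∃ w, G.Adj u w ∧ G.degree w = 2) := by
  constructor
  · intro v u hKD hadj hdu5 h2
    obtain ⟨hdv, hfil⟩ := hKD
    obtain ⟨v1, v2, h12, hpair⟩ := Finset.card_eq_two.mp hfil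
    have hv1m : v1 ∈ (G.neighborFinset v).filter (fun u => G.degree u = 2) := by
      rw [hpair]; exact Finset.mem_insert_self _ _
    have hv2m : v2 ∈ (G.neighborFinset v).filter (fun u => G.degree u = 2) := by
      rw [hpair]; simp
    obtain ⟨hv1n, hd1⟩ := Finset.mem_filter.mp hv1m
    obtain ⟨hv2n, hd2⟩ := Finset.mem_filter.mp hv2m
    have hv1 : G.Adj v v1 := (mem_neighborFinset G v v1).mp hv1n
    have hv2 : G.Adj v v2 := (mem_neighborFinset G v v2).mp hv2n
    obtain ⟨w1, hw1, w2, hw2, hww⟩ := Finset.one_lt_card.mp (by omega : 1 <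
      ((G.neighborFinset u).filter (fun w => G.degree w = 2)).card)
    obtain ⟨hw1n, hdw1⟩ := Finset.mem_filter.mp hw1
    obtain ⟨hw2n, hdw2⟩ := Finset.mem_filter.mp hw2
    have hvw1 : v ≠ w1 := fun h => by rw [← h] at hdw1; omega
    have hvw2 : v ≠ w2 := fun h => by rw [← h] at hdw2; omega
    have hW : ({w1, w2} : Finset V) ⊆ G.neighborFinset u := by
      intro x hx
      rcases Finset.mem_insert.mp hx with rfl | hx
      · exact hw1n
      · rw [Finset.mem_singleton] at hx; subst hx; exact hw2n
    have hWcard : ({w1, w2} : Finset V).card = 2 := Finset.card_pair hww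
    have hdu3 : 3 ≤ G.degree u := by
      have hsub : ({v, w1, w2} : Finset V) ⊆ G.neighborFinset u := by
        intro x hx
        rcases Finset.mem_insert.mp hx with rfl | hx
        · exact (mem_neighborFinset G u x).mpr hadj.symm
        · exact hW hx
      have h3 : ({v, w1, w2} : Finset V).card = 3 := by
        rw [Finset.card_insert_of_notMem (by simp [hvw1, hvw2]), Finset.card_pair hww]
      have := Finset.card_le_card hsub
      rw [h3, G.card_neighborFinset_eq_degree] at this
      exact this
    refine key G hG ({w1, w2} : Finset V) hdv hv1 hv2 hd1 hd2 h12 hadj hdu5 hdu3 hW ?_ ?_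
    · intro w hw
      rcases Finset.mem_insert.mp hw with rfl | hw
      · exact hdw1
      · rw [Finset.mem_singleton] at hw; subst hw; exact hdw2
    · rw [hWcard]; omega
  · rintro v u hKD hadj hdu4 ⟨w, huw, hdw⟩
    obtain ⟨hdv, hfil⟩ := hKD
    obtain ⟨v1, v2, h12, hpair⟩ := Finset.card_eq_two.mp hfil
    have hv1m : v1 ∈ (G.neighborFinset v).filter (fun u => G.degree u = 2) := by
      rw [hpair]; exact Finset.mem_insert_self _ _
    have hv2m : v2 ∈ (G.neighborFinset v).filter (fun u => G.degree u = 2) := by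
      rw [hpair]; simp
    obtain ⟨hv1n, hd1⟩ := Finset.mem_filter.mp hv1m
    obtain ⟨hv2n, hd2⟩ := Finset.mem_filter.mp hv2m
    have hv1 : G.Adj v v1 := (mem_neighborFinset G v v1).mp hv1n
    have hv2 : G.Adj v v2 := (mem_neighborFinset G v v2).mp hv2n
    have hvw : v ≠ w := fun h => by rw [← h] at hdw; omega
    by_cases hdu : G.degree u = 2
    · exact key2 G hG hdv hadj.symm hdu huw hdw
    · have hdu3 : 3 ≤ G.degree u := by
        have hsub : ({v, w} : Finset V) ⊆ G.neighborFinset u := by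
          intro x hx
          rcases Finset.mem_insert.mp hx with rfl | hx
          · exact (mem_neighborFinset G u x).mpr hadj.symm
          · rw [Finset.mem_singleton] at hx; subst hx
            exact (mem_neighborFinset G u x).mpr huw
        have h2 : ({v, w} : Finset V).card = 2 := Finset.card_pair hvw
        have := Finset.card_le_card hsub
        rw [h2, G.card_neighborFinset_eq_degree] at this
        omega
      refine key G hG ({w} : Finset V) hdv hv1 hv2 hd1 hd2 h12 hadj (by omega) hdu3 ?_ ?_ ?_
      · intro x hx
        rw [Finset.mem_singleton] at hx; subst hx
        exact (mem_neighborFinset G u x).mpr huw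
      · intro x hx
        rw [Finset.mem_singleton] at hx; subst hx; exact hdw
      · rw [Finset.card_singleton]; omega
end
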